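/- arXiv:1607.02692 — 8 statements merged into one kernel-verified Lean document; each statement's English description precedes it below -/
import Mathlib

section
/- Every special unitary matrix U in SU(n) can be written as U = Θ₁ · D · Θ₂, where Θ₁, Θ₂ are real special orthogonal matrices in SO(n) and D = diag(exp(-iλ₁), ..., exp(-iλₙ)) is a diagonal unitary matrix with real λ₁, ..., λₙ satisfying λ₁ + ... + λₙ = 0. -/
/-!
Write `S := U Uᵀ`, a symmetric unitary matrix. Its real and imaginary parts are real symmetric
matrices, and they commute because `S` is normal and `S* = conj S`. Diagonalizing them
simultaneously by a real orthogonal `Θ` gives `S = Θ D Θᵀ` with `D` diagonal and unitary, i.e.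
`D = E²` for a diagonal phase matrix `E`. Then `V := Θ E` satisfies `U Uᵀ = V Vᵀ`, so
`W := V⁻¹ U` is unitary with `W Wᵀ = 1`, hence `W* = Wᵀ`, i.e. `W` is real orthogonal, and
`U = Θ E W`. Finally, the signs of `det Θ` and `det W` are moved into one diagonal phase, which
at the same time makes the phases sum to zero (using `det U = 1`).
-/

open Matrix Complex ComplexConjugate Module.End

theorem DirectSum.IsInternal.exists_orthonormalBasis_subordinate
    {𝕜 E ι : Type*} [RCLike 𝕜] [DecidableEq ι] [NormedAddCommGroup E] [InnerProductSpace 𝕜 E]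
    [FiniteDimensional 𝕜 E] {n : ℕ} (hn : Module.finrank 𝕜 E = n) {V : ι → Submodule 𝕜 E}
    (hV : DirectSum.IsInternal V)
    (hV' : OrthogonalFamily 𝕜 (fun i => V i) fun i => (V i).subtypeₗᵢ) :
    ∃ (b : OrthonormalBasis (Fin n) 𝕜 E) (c : Fin n → ι), ∀ a, b a ∈ V (c a) := by
  -- `subordinateOrthonormalBasis` needs a finite index type; only finitely many `V i` are nonzero
  let _ : Fintype {i // V i ≠ ⊥} := hV.submodule_iSupIndep.fintypeNeBotOfFiniteDimensional
  have hW := DirectSum.isInternal_ne_bot_iff.mpr hV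
  have hW' := hV'.comp (Subtype.val_injective (p := fun i => V i ≠ ⊥))
  exact ⟨hW.subordinateOrthonormalBasis hn hW',
    fun a => (hW.subordinateOrthonormalBasisIndex hn a hW').1,
    fun a => hW.subordinateOrthonormalBasis_subordinate hn a hW'⟩

theorem LinearMap.IsSymmetric.exists_orthonormalBasis_eigenvectors_of_commute
    {𝕜 E : Type*} [RCLike 𝕜] [NormedAddCommGroup E] [InnerProductSpace 𝕜 E]
    [FiniteDimensional 𝕜 E] {n : ℕ} (hn : Module.finrank 𝕜 E = n) {A B : E →ₗ[𝕜] E}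
    (hA : A.IsSymmetric) (hB : B.IsSymmetric) (hAB : Commute A B) :
    ∃ (b : OrthonormalBasis (Fin n) 𝕜 E) (f g : Fin n → 𝕜),
      ∀ i, A (b i) = f i • b i ∧ B (b i) = g i • b i := by
  classical
  obtain ⟨b, c, hb⟩ :=
    (hA.directSum_isInternal_of_commute hB hAB).exists_orthonormalBasis_subordinate hn
      (hA.orthogonalFamily_eigenspace_inf_eigenspace hB)
  exact ⟨b, fun i => (c i).2, fun i => (c i).1, fun i =>
    ⟨mem_eigenspace_iff.mp (hb i).1, mem_eigenspace_iff.mp (hb i).2⟩⟩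

namespace Matrix

section RCLike

variable {𝕜 ι : Type*} [RCLike 𝕜] [Fintype ι] [DecidableEq ι]

theorem _root_.OrthonormalBasis.eq_toMatrix_mul_diagonal_mul_star {A : Matrix ι ι 𝕜}
    (b : OrthonormalBasis ι 𝕜 (EuclideanSpace 𝕜 ι)) {f : ι → 𝕜}
    (hb : ∀ j, A *ᵥ b j = f j • b j) :
    A = (EuclideanSpace.basisFun ι 𝕜).toBasis.toMatrix b * diagonal f *
      star ((EuclideanSpace.basisFun ι 𝕜).toBasis.toMatrix b) := by
  set W := (EuclideanSpace.basisFun ι 𝕜).toBasis.toMatrix b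
  have hW : W * star W = 1 :=
    mem_unitaryGroup_iff.mp ((EuclideanSpace.basisFun ι 𝕜).toMatrix_orthonormalBasis_mem_unitary b)
  have hW_apply : ∀ i j, W i j = b j i := fun _ _ => rfl
  have hAW : A * W = W * diagonal f := by
    ext i j
    rw [mul_diagonal, hW_apply, mul_comm]
    simpa [Matrix.mul_apply, mulVec, dotProduct, hW_apply] using congrFun (hb j) i
  rw [← hAW, mul_assoc, hW, mul_one]

theorem IsHermitian.exists_unitary_diagonal_of_commute {A B : Matrix ι ι 𝕜}
    (hA : A.IsHermitian) (hB : B.IsHermitian) (hAB : Commute A B) :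
    ∃ W ∈ unitaryGroup ι 𝕜, ∃ f g : ι → 𝕜,
      A = W * diagonal f * star W ∧ B = W * diagonal g * star W := by
  have hcomm : Commute (toEuclideanLin A) (toEuclideanLin B) := by
    ext v
    simp [toLpLin_apply, mulVec_mulVec, hAB.eq]
  obtain ⟨b, f, g, hb⟩ :=
    (isSymmetric_toEuclideanLin_iff.mpr hA).exists_orthonormalBasis_eigenvectors_of_commute
      finrank_euclideanSpace (isSymmetric_toEuclideanLin_iff.mpr hB) hcomm
  let e := (Fintype.equivFin ι).symm
  refine ⟨_, (EuclideanSpace.basisFun ι 𝕜).toMatrix_orthonormalBasis_mem_unitary (b.reindex e),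
    f ∘ e.symm, g ∘ e.symm, ?_, ?_⟩ <;>
  refine (b.reindex e).eq_toMatrix_mul_diagonal_mul_star fun j => ?_
  · simpa [toLpLin_apply] using congrArg WithLp.ofLp (hb (e.symm j)).1
  · simpa [toLpLin_apply] using congrArg WithLp.ofLp (hb (e.symm j)).2

end RCLike

variable {ι : Type*}

theorem star_map_ofReal (Θ : Matrix ι ι ℝ) : star (Θ.map ofReal) = (Θ.map ofReal)ᵀ := by
  ext i j
  simp [star_apply]

theorem map_ofReal_mul [Fintype ι] (P Q : Matrix ι ι ℝ) :
    (P * Q).map ofReal = P.map ofReal * Q.map ofReal :=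
  Matrix.map_mul (f := ofRealHom)

theorem det_map_ofReal [Fintype ι] [DecidableEq ι] (Θ : Matrix ι ι ℝ) :
    (Θ.map ofReal).det = Θ.det :=
  (RingHom.map_det ofRealHom Θ).symm

section DecidableEq

variable [DecidableEq ι]

noncomputable def phaseDiagonal (lam : ι → ℝ) : Matrix ι ι ℂ :=
  diagonal fun i => exp (-(I * lam i))

theorem phaseDiagonal_zero : phaseDiagonal (0 : ι → ℝ) = 1 := by
  simp [phaseDiagonal]

theorem transpose_phaseDiagonal (a : ι → ℝ) : (phaseDiagonal a)ᵀ = phaseDiagonal a :=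
  diagonal_transpose _

theorem star_phaseDiagonal (a : ι → ℝ) : star (phaseDiagonal a) = phaseDiagonal (-a) := by
  simp [phaseDiagonal, star_eq_conjTranspose, diagonal_conjTranspose, ← Complex.exp_conj]

variable [Fintype ι]

theorem phaseDiagonal_add (a b : ι → ℝ) :
    phaseDiagonal (a + b) = phaseDiagonal a * phaseDiagonal b := by
  simp only [phaseDiagonal, diagonal_mul_diagonal, ← exp_add, Pi.add_apply, ofReal_add]
  ring_nf

theorem phaseDiagonal_mem_unitaryGroup (a : ι → ℝ) : phaseDiagonal a ∈ unitaryGroup ι ℂ := by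
  rw [mem_unitaryGroup_iff, star_phaseDiagonal, ← phaseDiagonal_add, add_neg_cancel,
    phaseDiagonal_zero]

theorem det_phaseDiagonal (a : ι → ℝ) : (phaseDiagonal a).det = exp (-(I * ∑ i, a i)) := by
  simp [phaseDiagonal, det_diagonal, ← exp_sum, Finset.mul_sum]

theorem exists_phaseDiagonal_eq_of_diagonal_mem_unitaryGroup {μ : ι → ℂ}
    (hμ : diagonal μ ∈ unitaryGroup ι ℂ) : ∃ lam : ι → ℝ, diagonal μ = phaseDiagonal lam := by
  have hnorm : ∀ i, ‖μ i‖ = 1 := fun i => by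
    have := congrFun (congrFun (mem_unitaryGroup_iff.mp hμ) i) i
    simp [star_eq_conjTranspose, diagonal_conjTranspose, mul_conj] at this
    simpa [Complex.norm_def] using this
  refine ⟨fun i => -arg (μ i), congrArg diagonal (funext fun i => ?_)⟩
  simpa [hnorm i, mul_comm I] using (norm_mul_exp_arg_mul_I (μ i)).symm

theorem map_ofReal_mem_unitaryGroup_iff {Θ : Matrix ι ι ℝ} :
    Θ.map ofReal ∈ unitaryGroup ι ℂ ↔ Θ ∈ orthogonalGroup ι ℝ := by
  rw [mem_unitaryGroup_iff, mem_orthogonalGroup_iff, star_map_ofReal, ← transpose_map,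
    ← map_ofReal_mul, ← (map_injective ofReal_injective).eq_iff,
    Matrix.map_one _ ofReal_zero ofReal_one]

theorem det_mul_self_of_mem_orthogonalGroup {Θ : Matrix ι ι ℝ} (hΘ : Θ ∈ orthogonalGroup ι ℝ) :
    Θ.det * Θ.det = 1 :=
  Unitary.star_mul_self_of_mem (det_of_mem_unitary hΘ)

theorem exists_map_ofReal_eq_of_mem_unitaryGroup {W : Matrix ι ι ℂ}
    (hW : W ∈ unitaryGroup ι ℂ) (hWT : W * Wᵀ = 1) :
    ∃ Θ ∈ orthogonalGroup ι ℝ, W = Θ.map ofReal := by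
  have hstar : star W = Wᵀ := by
    rw [← mul_one (star W), ← hWT, ← mul_assoc, mem_unitaryGroup_iff'.mp hW, one_mul]
  have hW_real : W = (W.map re).map ofReal := by
    ext i j
    exact (conj_eq_iff_re.mp (by simpa [star_apply] using congrFun (congrFun hstar j) i)).symm
  exact ⟨W.map re, map_ofReal_mem_unitaryGroup_iff.mp (hW_real ▸ hW), hW_real⟩

theorem exists_orthogonal_of_mul_transpose_eq {U V : Matrix ι ι ℂ}
    (hU : U ∈ unitaryGroup ι ℂ) (hV : V ∈ unitaryGroup ι ℂ) (h : U * Uᵀ = V * Vᵀ) :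
    ∃ Θ ∈ orthogonalGroup ι ℝ, U = V * Θ.map ofReal := by
  have hW : star V * U * (star V * U)ᵀ = 1 := by
    rw [transpose_mul, mul_assoc, ← mul_assoc U, h, ← mul_assoc, ← mul_assoc,
      mem_unitaryGroup_iff'.mp hV, one_mul, ← transpose_mul, mem_unitaryGroup_iff'.mp hV,
      transpose_one]
  obtain ⟨Θ, hΘ, hΘW⟩ :=
    exists_map_ofReal_eq_of_mem_unitaryGroup (mul_mem (Unitary.star_mem hV) hU) hW
  refine ⟨Θ, hΘ, ?_⟩
  rw [← hΘW, ← mul_assoc, mem_unitaryGroup_iff.mp hV, one_mul]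

theorem commute_map_re_map_im {S : Matrix ι ι ℂ} (hS : Sᵀ = S) (hSn : Commute S (star S)) :
    Commute (S.map re) (S.map im) := by
  have hconj : ∀ i j, star S i j = conj (S i j) := fun i j => by
    rw [star_apply, ← transpose_apply S, hS]; rfl
  have hre : (S.map re).map ofReal = (2⁻¹ : ℂ) • (S + star S) := by
    ext i j
    simp [hconj, re_eq_add_conj, div_eq_inv_mul]
  have him : (S.map im).map ofReal = (2 * I)⁻¹ • (S - star S) := by
    ext i j
    simp [hconj, im_eq_sub_conj, div_eq_inv_mul]
  apply map_injective ofReal_injective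
  simp only [map_ofReal_mul, hre, him]
  exact (((Commute.refl S).sub_right hSn).add_left
    (hSn.symm.sub_right (Commute.refl _))).smul_left _ |>.smul_right _

theorem exists_orthogonal_diagonal_of_transpose_eq_self {S : Matrix ι ι ℂ} (hS : Sᵀ = S)
    (hSn : Commute S (star S)) :
    ∃ Θ ∈ orthogonalGroup ι ℝ, ∃ μ : ι → ℂ,
      S = Θ.map ofReal * diagonal μ * star (Θ.map ofReal) := by
  have hX : (S.map re).IsHermitian := by
    rw [IsHermitian, conjTranspose_eq_transpose_of_trivial, ← transpose_map, hS]
  have hY : (S.map im).IsHermitian := by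
    rw [IsHermitian, conjTranspose_eq_transpose_of_trivial, ← transpose_map, hS]
  obtain ⟨Θ, hΘ, f, g, hf, hg⟩ :=
    hX.exists_unitary_diagonal_of_commute hY (commute_map_re_map_im hS hSn)
  rw [star_eq_conjTranspose, conjTranspose_eq_transpose_of_trivial] at hf hg
  refine ⟨Θ, hΘ, fun i => f i + I * g i, ?_⟩
  have hS_re_im : S = (S.map re).map ofReal + I • (S.map im).map ofReal := by
    ext i j
    simp [mul_comm I]
  have hμ_re_im : diagonal (fun i => (f i : ℂ) + I * g i) =
      diagonal (fun i => (f i : ℂ)) + I • diagonal (fun i => (g i : ℂ)) := by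
    rw [← diagonal_smul, ← diagonal_add]
    rfl
  rw [hS_re_im, hf, hg, hμ_re_im, star_map_ofReal]
  simp only [map_ofReal_mul, transpose_map, diagonal_map ofReal_zero, mul_add, add_mul,
    mul_smul_comm, smul_mul_assoc]

theorem exists_orthogonal_phaseDiagonal_of_transpose_eq_self {S : Matrix ι ι ℂ}
    (hSu : S ∈ unitaryGroup ι ℂ) (hS : Sᵀ = S) :
    ∃ Θ ∈ orthogonalGroup ι ℝ, ∃ lam : ι → ℝ,
      S = Θ.map ofReal * phaseDiagonal lam * (Θ.map ofReal * phaseDiagonal lam)ᵀ := by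
  obtain ⟨Θ, hΘ, μ, hS_diag⟩ := exists_orthogonal_diagonal_of_transpose_eq_self hS
    ((mem_unitaryGroup_iff.mp hSu).trans (mem_unitaryGroup_iff'.mp hSu).symm)
  have hΘc := map_ofReal_mem_unitaryGroup_iff.mpr hΘ
  have hμ : diagonal μ ∈ unitaryGroup ι ℂ := by
    have : diagonal μ = star (Θ.map ofReal) * S * Θ.map ofReal := by
      rw [hS_diag]
      simp only [← mul_assoc, mem_unitaryGroup_iff'.mp hΘc, one_mul]
      rw [mul_assoc, mem_unitaryGroup_iff'.mp hΘc, mul_one]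
    rw [this]
    exact mul_mem (mul_mem (Unitary.star_mem hΘc) hSu) hΘc
  obtain ⟨lam, hlam⟩ := exists_phaseDiagonal_eq_of_diagonal_mem_unitaryGroup hμ
  have hhalves : (fun i => lam i / 2) + (fun i => lam i / 2) = lam :=
    funext fun i => add_halves (lam i)
  refine ⟨Θ, hΘ, fun i => lam i / 2, ?_⟩
  rw [transpose_mul, transpose_phaseDiagonal, mul_assoc, ← mul_assoc (phaseDiagonal _),
    ← phaseDiagonal_add, hhalves, ← mul_assoc, ← hlam, hS_diag, star_map_ofReal]

theorem exists_orthogonal_phaseDiagonal_orthogonal {U : Matrix ι ι ℂ}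
    (hU : U ∈ unitaryGroup ι ℂ) :
    ∃ Θ₁ ∈ orthogonalGroup ι ℝ, ∃ Θ₂ ∈ orthogonalGroup ι ℝ, ∃ lam : ι → ℝ,
      U = Θ₁.map ofReal * phaseDiagonal lam * Θ₂.map ofReal := by
  obtain ⟨Θ₁, hΘ₁, lam, hUUT⟩ := exists_orthogonal_phaseDiagonal_of_transpose_eq_self
    (mul_mem hU (transpose_mem_unitaryGroup_iff.mpr hU))
    (by rw [transpose_mul, transpose_transpose])
  obtain ⟨Θ₂, hΘ₂, hU_eq⟩ := exists_orthogonal_of_mul_transpose_eq hU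
    (mul_mem (map_ofReal_mem_unitaryGroup_iff.mpr hΘ₁) (phaseDiagonal_mem_unitaryGroup lam)) hUUT
  exact ⟨Θ₁, hΘ₁, Θ₂, hΘ₂, lam, hU_eq⟩

theorem diagonal_update_one_mul_self {s : ℝ} (hs : s * s = 1) (i₀ : ι) :
    diagonal (Function.update 1 i₀ s) * diagonal (Function.update 1 i₀ s) = 1 := by
  rw [diagonal_mul_diagonal, ← diagonal_one]
  congr 1
  funext j
  rcases eq_or_ne j i₀ with rfl | hj <;> simp [*]

theorem diagonal_update_one_mem_orthogonalGroup {s : ℝ} (hs : s * s = 1) (i₀ : ι) :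
    diagonal (Function.update 1 i₀ s) ∈ orthogonalGroup ι ℝ := by
  rw [mem_orthogonalGroup_iff, diagonal_transpose, diagonal_update_one_mul_self hs]

theorem det_diagonal_update_one (s : ℝ) (i₀ : ι) :
    (diagonal (Function.update 1 i₀ s)).det = s := by
  rw [det_diagonal, Finset.prod_update_of_mem (Finset.mem_univ _)]
  simp

theorem map_ofReal_diagonal_update_one_mul_phaseDiagonal {s t c : ℝ}
    (hc : exp (I * c) = s * t) (lam : ι → ℝ) (i₀ : ι) :
    (diagonal (Function.update 1 i₀ s)).map ofReal * phaseDiagonal lam *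
        (diagonal (Function.update 1 i₀ t)).map ofReal =
      phaseDiagonal (lam - Pi.single i₀ c) := by
  simp only [phaseDiagonal, diagonal_map ofReal_zero, diagonal_mul_diagonal]
  congr 1
  funext j
  rcases eq_or_ne j i₀ with rfl | hj
  · have hshift : exp (-(I * ((lam j - c : ℝ) : ℂ))) = exp (-(I * lam j)) * exp (I * c) := by
      rw [← exp_add]
      push_cast
      ring_nf
    simp only [Function.update_self, Pi.sub_apply, Pi.single_eq_same, hshift, hc]
    ring
  · simp [hj]

theorem exp_I_mul_sum_eq_det_mul_det {U : Matrix ι ι ℂ} (hdet : U.det = 1)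
    {Θ₁ Θ₂ : Matrix ι ι ℝ} {lam : ι → ℝ}
    (hU : U = Θ₁.map ofReal * phaseDiagonal lam * Θ₂.map ofReal) :
    exp (I * ∑ i, lam i) = Θ₁.det * Θ₂.det := by
  have hdet' : (Θ₁.det : ℂ) * exp (-(I * ∑ i, lam i)) * Θ₂.det = 1 := by
    rw [← hdet, hU, det_mul, det_mul, det_phaseDiagonal, det_map_ofReal, det_map_ofReal]
  calc exp (I * ∑ i, lam i)
      = exp (I * ∑ i, lam i) * (Θ₁.det * exp (-(I * ∑ i, lam i)) * Θ₂.det) := by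
        rw [hdet', mul_one]
    _ = Θ₁.det * Θ₂.det * (exp (I * ∑ i, lam i) * exp (-(I * ∑ i, lam i))) := by ring
    _ = Θ₁.det * Θ₂.det := by rw [← exp_add, add_neg_cancel, exp_zero, mul_one]

theorem exists_specialOrthogonal_phaseDiagonal_specialOrthogonal {U : Matrix ι ι ℂ}
    (hdet : U.det = 1) {Θ₁ Θ₂ : Matrix ι ι ℝ} (hΘ₁ : Θ₁ ∈ orthogonalGroup ι ℝ)
    (hΘ₂ : Θ₂ ∈ orthogonalGroup ι ℝ) {lam : ι → ℝ}
    (hU : U = Θ₁.map ofReal * phaseDiagonal lam * Θ₂.map ofReal) :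
    ∃ (Θ₁' Θ₂' : Matrix ι ι ℝ) (lam' : ι → ℝ),
      Θ₁' ∈ orthogonalGroup ι ℝ ∧ Θ₁'.det = 1 ∧ Θ₂' ∈ orthogonalGroup ι ℝ ∧ Θ₂'.det = 1 ∧
      ∑ i, lam' i = 0 ∧ U = Θ₁'.map ofReal * phaseDiagonal lam' * Θ₂'.map ofReal := by
  obtain hι | ⟨⟨i₀⟩⟩ := isEmpty_or_nonempty ι
  · exact ⟨Θ₁, Θ₂, lam, hΘ₁, det_isEmpty, hΘ₂, det_isEmpty, by simp, hU⟩
  -- multiply column `i₀` of `Θ₁` by `det Θ₁` and row `i₀` of `Θ₂` by `det Θ₂`; the product of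
  -- these signs is `exp (I * ∑ lam)`, absorbed by shifting `lam i₀` by `-∑ lam`
  have hs := det_mul_self_of_mem_orthogonalGroup hΘ₁
  have ht := det_mul_self_of_mem_orthogonalGroup hΘ₂
  have hR : ∀ r : ℝ, r * r = 1 → (diagonal (Function.update 1 i₀ r)).map ofReal *
      (diagonal (Function.update 1 i₀ r)).map ofReal = 1 := fun r hr => by
    rw [← map_ofReal_mul, diagonal_update_one_mul_self hr, Matrix.map_one _ ofReal_zero ofReal_one]
  refine ⟨Θ₁ * diagonal (Function.update 1 i₀ Θ₁.det),
    diagonal (Function.update 1 i₀ Θ₂.det) * Θ₂, lam - Pi.single i₀ (∑ i, lam i),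
    mul_mem hΘ₁ (diagonal_update_one_mem_orthogonalGroup hs i₀),
    by rw [det_mul, det_diagonal_update_one, hs],
    mul_mem (diagonal_update_one_mem_orthogonalGroup ht i₀) hΘ₂,
    by rw [det_mul, det_diagonal_update_one, ht], by simp [Finset.sum_sub_distrib], ?_⟩
  rw [map_ofReal_mul, map_ofReal_mul, ← map_ofReal_diagonal_update_one_mul_phaseDiagonal
    (exp_I_mul_sum_eq_det_mul_det hdet hU) lam i₀, hU]
  simp only [mul_assoc]
  rw [← mul_assoc ((diagonal _).map ofReal) ((diagonal _).map ofReal), hR _ hs, one_mul,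
    ← mul_assoc ((diagonal _).map ofReal) ((diagonal _).map ofReal), hR _ ht, one_mul]

end DecidableEq

end Matrix

/-- Every `U ∈ SU(n)` factors as `Θ₁ ⬝ diag(exp(-i λ₁), …, exp(-i λₙ)) ⬝ Θ₂`
with `Θ₁, Θ₂ ∈ SO(n)` real special orthogonal and `∑ λᵢ = 0`. -/
theorem su_so_diag_so_decomposition (n : ℕ) (U : Matrix (Fin n) (Fin n) ℂ)
    (hU : U ∈ Matrix.unitaryGroup (Fin n) ℂ) (hdet : U.det = 1) :
    ∃ (Θ₁ Θ₂ : Matrix (Fin n) (Fin n) ℝ) (lam : Fin n → ℝ),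
      Θ₁ ∈ Matrix.orthogonalGroup (Fin n) ℝ ∧ Θ₁.det = 1 ∧
      Θ₂ ∈ Matrix.orthogonalGroup (Fin n) ℝ ∧ Θ₂.det = 1 ∧
      (∑ i, lam i) = 0 ∧
      U = (Θ₁.map (Complex.ofReal)) *
            Matrix.diagonal (fun i => Complex.exp (-(Complex.I * (lam i)))) *
          (Θ₂.map (Complex.ofReal)) := by
  obtain ⟨Θ₁, hΘ₁, Θ₂, hΘ₂, lam, hU_eq⟩ := exists_orthogonal_phaseDiagonal_orthogonal hU
  exact exists_specialOrthogonal_phaseDiagonal_specialOrthogonal hdet hΘ₁ hΘ₂ hU_eq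
end

section
/- For any U in SU(n), the matrix U·Uᵀ (where Uᵀ is the transpose, not conjugate transpose) is a symmetric unitary matrix of determinant 1, and there exist Θ ∈ O(n) real orthogonal and a diagonal unitary Σ with U·Uᵀ = Θ Σ Θᵀ. -/
/-!
`U Uᵀ` is symmetric and unitary, so it suffices to diagonalize a symmetric unitary `M` by a real
orthogonal matrix. Write `M = A + i B` with `A`, `B` real symmetric. Since `M` is symmetric,
`M* = A - i B`, and the normality `M M* = M* M` of the unitary `M` reduces to `A B = B A`. Two
commuting real symmetric matrices share an orthonormal eigenbasis, whose columns form an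
orthogonal `Θ` with `Θᵀ M Θ` diagonal; this diagonal matrix is unitary, so its entries have
modulus one.
-/

open Module Module.End Matrix Complex

theorem LinearMap.IsSymmetric.exists_orthonormalBasis_eigenvectors_of_commute_s1
    {𝕜 E ι : Type*} [RCLike 𝕜] [NormedAddCommGroup E] [InnerProductSpace 𝕜 E]
    [FiniteDimensional 𝕜 E] [Fintype ι] (hι : finrank 𝕜 E = Fintype.card ι)
    {S T : E →ₗ[𝕜] E} (hS : S.IsSymmetric) (hT : T.IsSymmetric) (hST : Commute S T) :
    ∃ (b : OrthonormalBasis ι 𝕜 E) (α β : ι → 𝕜),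
      ∀ j, S (b j) = α j • b j ∧ T (b j) = β j • b j := by
  classical
  let V : 𝕜 × 𝕜 → Submodule 𝕜 E := fun p ↦ eigenspace S p.2 ⊓ eigenspace T p.1
  have hV : DirectSum.IsInternal V := hS.directSum_isInternal_of_commute hT hST
  -- `subordinateOrthonormalBasis` needs a finite index type: keep the nonzero joint eigenspaces.
  let P := {p : 𝕜 × 𝕜 // V p ≠ ⊥}
  have : Finite P := WellFoundedGT.finite_ne_bot_of_iSupIndep hV.submodule_iSupIndep
  have : Fintype P := Fintype.ofFinite P
  have hVP : DirectSum.IsInternal (fun p : P ↦ V p) := DirectSum.isInternal_ne_bot_iff.mpr hV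
  have hVP_orth : OrthogonalFamily 𝕜 (fun p : P ↦ V p) (fun p ↦ (V p).subtypeₗᵢ) :=
    (hS.orthogonalFamily_eigenspace_inf_eigenspace hT).comp Subtype.val_injective
  let e := Fintype.equivFin ι
  let b := (hVP.subordinateOrthonormalBasis hι hVP_orth).reindex e.symm
  let p : ι → P := fun j ↦ hVP.subordinateOrthonormalBasisIndex hι (e j) hVP_orth
  refine ⟨b, fun j ↦ (p j).1.2, fun j ↦ (p j).1.1, fun j ↦ ?_⟩
  have hb : b j ∈ V (p j) := by
    simpa [b] using hVP.subordinateOrthonormalBasis_subordinate hι (e j) hVP_orth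
  exact ⟨mem_eigenspace_iff.mp hb.1, mem_eigenspace_iff.mp hb.2⟩

namespace Matrix

variable {ι : Type*} [Fintype ι] [DecidableEq ι]

theorem IsHermitian.exists_unitary_mul_eq_mul_diagonal_of_commute
    {𝕜 : Type*} [RCLike 𝕜] {A B : Matrix ι ι 𝕜}
    (hA : A.IsHermitian) (hB : B.IsHermitian) (hAB : Commute A B) :
    ∃ U ∈ unitaryGroup ι 𝕜, ∃ α β : ι → 𝕜, A * U = U * diagonal α ∧ B * U = U * diagonal β := by
  have hST : Commute (toEuclideanLin A) (toEuclideanLin B) := by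
    simp only [Commute, SemiconjBy, Module.End.mul_eq_comp, ← toLpLin_mul_same, hAB.eq]
  obtain ⟨b, α, β, hb⟩ :=
    (isSymmetric_toEuclideanLin_iff.mpr hA).exists_orthonormalBasis_eigenvectors_of_commute_s1
      finrank_euclideanSpace (isSymmetric_toEuclideanLin_iff.mpr hB) hST
  let U := (EuclideanSpace.basisFun ι 𝕜).toBasis.toMatrix b.toBasis
  have mul_U {C : Matrix ι ι 𝕜} {γ : ι → 𝕜} (h : ∀ j, toEuclideanLin C (b j) = γ j • b j) :
      C * U = U * diagonal γ := by
    ext i j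
    rw [mul_diagonal]
    simpa [U, Matrix.mul_apply, mulVec, dotProduct, Basis.toMatrix_apply, mul_comm]
      using congr(($(h j) : ι → 𝕜) i)
  exact ⟨U, (EuclideanSpace.basisFun ι 𝕜).toMatrix_orthonormalBasis_mem_unitary b, α, β,
    mul_U fun j ↦ (hb j).1, mul_U fun j ↦ (hb j).2⟩

theorem diagonal_mem_unitaryGroup_iff {𝕜 : Type*} [RCLike 𝕜] {σ : ι → 𝕜} :
    diagonal σ ∈ unitaryGroup ι 𝕜 ↔ ∀ i, ‖σ i‖ = 1 := by
  rw [mem_unitaryGroup_iff', star_eq_conjTranspose, diagonal_conjTranspose, diagonal_mul_diagonal,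
    ← diagonal_one, diagonal_eq_diagonal_iff]
  refine forall_congr' fun i ↦ ?_
  rw [Pi.star_apply, RCLike.star_def, RCLike.conj_mul, ← RCLike.ofReal_pow, ← RCLike.ofReal_one,
    RCLike.ofReal_inj, pow_eq_one_iff_of_nonneg (norm_nonneg _) two_ne_zero]

theorem map_re_add_I_smul_map_im {m n : Type*} (M : Matrix m n ℂ) :
    M = (M.map re).map ofReal + I • (M.map im).map ofReal := by
  ext i j
  simp [mul_comm I, re_add_im]

theorem map_conj_eq_map_re_sub_I_smul_map_im {m n : Type*} (M : Matrix m n ℂ) :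
    M.map (starRingEnd ℂ) = (M.map re).map ofReal - I • (M.map im).map ofReal := by
  ext i j
  apply Complex.ext <;> simp

theorem IsSymm.commute_map_re_map_im_of_mem_unitaryGroup {M : Matrix ι ι ℂ}
    (hsymm : M.IsSymm) (hM : M ∈ unitaryGroup ι ℂ) : Commute (M.map re) (M.map im) := by
  set A := (M.map re).map ofReal
  set B := (M.map im).map ofReal
  have hstar : star M = A - I • B := by
    rw [star_eq_conjTranspose, Matrix.conjTranspose, hsymm.eq, ← map_conj_eq_map_re_sub_I_smul_map_im]
    rfl
  have hcomm : (2 * I) • (B * A - A * B) = M * star M - star M * M := by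
    rw [hstar]
    conv_rhs => rw [M.map_re_add_I_smul_map_im]
    simp only [add_mul, mul_add, sub_mul, mul_sub, smul_mul_assoc, mul_smul_comm]
    module
  rw [mem_unitaryGroup_iff.mp hM, mem_unitaryGroup_iff'.mp hM, sub_self,
    smul_eq_zero_iff_right (by simp), sub_eq_zero] at hcomm
  apply map_injective ofReal_injective
  change (M.map re * M.map im).map ofRealHom = (M.map im * M.map re).map ofRealHom
  rw [Matrix.map_mul, Matrix.map_mul]
  exact hcomm.symm

theorem IsSymm.exists_orthogonal_diagonalization_of_mem_unitaryGroup {M : Matrix ι ι ℂ}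
    (hsymm : M.IsSymm) (hM : M ∈ unitaryGroup ι ℂ) :
    ∃ Θ ∈ orthogonalGroup ι ℝ, ∃ σ : ι → ℂ,
      (∀ i, ‖σ i‖ = 1) ∧ M = Θ.map ofReal * diagonal σ * (Θ.map ofReal)ᵀ := by
  obtain ⟨Θ, hΘ, α, β, hαΘ, hβΘ⟩ :=
    IsHermitian.exists_unitary_mul_eq_mul_diagonal_of_commute
      (isHermitian_iff_isSymm.mpr (hsymm.map re)) (isHermitian_iff_isSymm.mpr (hsymm.map im))
      (hsymm.commute_map_re_map_im_of_mem_unitaryGroup hM)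
  have map_ofReal_mul (X Y : Matrix ι ι ℝ) : (X * Y).map ofReal = X.map ofReal * Y.map ofReal :=
    Matrix.map_mul (f := ofRealHom)
  have hΘc_inv : Θ.map ofReal * (Θ.map ofReal)ᵀ = 1 := by
    rw [← transpose_map, ← map_ofReal_mul, (mem_orthogonalGroup_iff ι ℝ).mp hΘ,
      Matrix.map_one _ ofReal_zero ofReal_one]
  set Θc := Θ.map ofReal
  have hΘc : Θc ∈ unitaryGroup ι ℂ := by
    rwa [mem_unitaryGroup_iff, show star Θc = Θcᵀ by ext; simp [Θc]]
  set σ : ι → ℂ := fun j ↦ α j + β j * I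
  have hMΘ : M * Θc = Θc * diagonal σ := by
    calc M * Θc = (M.map re * Θ).map ofReal + I • (M.map im * Θ).map ofReal := by
          conv_lhs => rw [M.map_re_add_I_smul_map_im]
          rw [add_mul, smul_mul_assoc, map_ofReal_mul, map_ofReal_mul]
      _ = (Θ * diagonal α).map ofReal + I • (Θ * diagonal β).map ofReal := by rw [hαΘ, hβΘ]
      _ = Θc * diagonal σ := by
          ext i j
          simp [mul_diagonal, Θc, σ]
          ring
  have hσ : diagonal σ = Θcᵀ * M * Θc := by
    rw [mul_assoc, hMΘ, ← mul_assoc, mul_eq_one_comm.mp hΘc_inv, one_mul]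
  refine ⟨Θ, hΘ, σ, diagonal_mem_unitaryGroup_iff.mp ?_, ?_⟩
  · rw [hσ]
    exact mul_mem (mul_mem (transpose_mem_unitaryGroup_iff.mpr hΘc) hM) hΘc
  · rw [← hMΘ, mul_assoc, hΘc_inv, mul_one]

end Matrix

/-- For `U ∈ SU(n)`, the matrix `U * Uᵀ` is symmetric, unitary, of determinant 1,
and there exist a real orthogonal `Θ` and a diagonal unitary `Σ` with `U Uᵀ = Θ Σ Θᵀ`. -/
theorem UUt_symmetric_unitary_diagonalizable (n : ℕ) (U : Matrix (Fin n) (Fin n) ℂ)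
    (hU : U ∈ Matrix.unitaryGroup (Fin n) ℂ) (hdet : U.det = 1) :
    (U * Uᵀ)ᵀ = U * Uᵀ ∧
    (U * Uᵀ) ∈ Matrix.unitaryGroup (Fin n) ℂ ∧
    (U * Uᵀ).det = 1 ∧
    ∃ (Θ : Matrix (Fin n) (Fin n) ℝ) (σ : Fin n → ℂ),
      Θ ∈ Matrix.orthogonalGroup (Fin n) ℝ ∧
      (∀ i, ‖σ i‖ = 1) ∧
      U * Uᵀ = (Θ.map (Complex.ofReal)) * Matrix.diagonal σ * (Θ.map (Complex.ofReal))ᵀ := by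
  have hsymm : (U * Uᵀ).IsSymm := isSymm_mul_transpose_self U
  have hunitary : U * Uᵀ ∈ unitaryGroup (Fin n) ℂ :=
    mul_mem hU (transpose_mem_unitaryGroup_iff.mpr hU)
  obtain ⟨Θ, hΘ, σ, hσ, hdiag⟩ :=
    hsymm.exists_orthogonal_diagonalization_of_mem_unitaryGroup hunitary
  exact ⟨hsymm.eq, hunitary, by rw [det_mul, det_transpose, hdet, one_mul], Θ, σ, hΘ, hσ, hdiag⟩
end

section
/- Let F and G be n×n unitary matrices that are both diagonalizable with eigenvalue vectors λ(F) and μ (listed with multiplicity on the unit circle), and suppose F = U₁ D(λ) U₁* and G = U₂ D(μ) U₂*. Then min over permutations σ of |λ - σ(μ)| (Euclidean norm of the vector of differences) is at most the Frobenius norm ‖F - G‖. -/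
/-!
Conjugating `F - G` by `U₁*` on the left and `U₂` on the right preserves the Frobenius norm and
yields the matrix with entries `W i j * (λ i - μ j)`, where `W = U₁* U₂` is unitary. Hence
`‖F - G‖² = ∑ i j, |W i j|² |λ i - μ j|²`, a linear functional evaluated at the doubly stochastic
matrix `(|W i j|²)`. By Birkhoff's theorem that matrix lies in the convex hull of the permutation
matrices, so some permutation matrix gives a value no larger, and that value is
`∑ i, |λ i - μ (σ i)|²`.
-/

open Matrix

theorem exists_perm_sum_le_sum_mul_of_mem_doublyStochastic {n : Type*} [Fintype n]
    [DecidableEq n] {S : Matrix n n ℝ} (hS : S ∈ doublyStochastic ℝ n) (C : Matrix n n ℝ) :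
    ∃ σ : Equiv.Perm n, ∑ i, C i (σ i) ≤ ∑ i, ∑ j, S i j * C i j := by
  let L : Matrix n n ℝ →ₗ[ℝ] ℝ :=
    { toFun := fun M => ∑ i, ∑ j, M i j * C i j
      map_add' := by simp [add_mul, Finset.sum_add_distrib]
      map_smul' := by simp [Finset.mul_sum, mul_assoc] }
  rw [← SetLike.mem_coe, doublyStochastic_eq_convexHull_permMatrix] at hS
  obtain ⟨_, ⟨σ, rfl⟩, hσ⟩ :=
    (L.concaveOn convex_univ).exists_le_of_mem_convexHull (Set.subset_univ _) hS
  refine ⟨σ, le_of_eq_of_le ?_ hσ⟩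
  simp [L, Equiv.toPEquiv_apply]

namespace Matrix

variable {𝕜 : Type*} [RCLike 𝕜] {m n : Type*}

theorem conjTranspose_mul_self_apply_self [Fintype m] (A : Matrix m n 𝕜) (j : n) :
    (Aᴴ * A) j j = ((∑ i, ‖A i j‖ ^ 2 : ℝ) : 𝕜) := by
  simp [mul_apply, RCLike.conj_mul]

theorem mul_conjTranspose_self_apply_self [Fintype n] (A : Matrix m n 𝕜) (i : m) :
    (A * Aᴴ) i i = ((∑ j, ‖A i j‖ ^ 2 : ℝ) : 𝕜) := by
  simp [mul_apply, RCLike.mul_conj]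

variable [Fintype m] [Fintype n]

theorem trace_conjTranspose_mul_self_eq (A : Matrix m n 𝕜) :
    (Aᴴ * A).trace = ((∑ i, ∑ j, ‖A i j‖ ^ 2 : ℝ) : 𝕜) := by
  simp only [trace, diag, conjTranspose_mul_self_apply_self, Finset.sum_comm (γ := m)]
  push_cast
  rfl

variable [DecidableEq m] [DecidableEq n]

theorem sum_sum_norm_sq_unitary_mul_mul_unitary {U : Matrix m m 𝕜} {V : Matrix n n 𝕜}
    (hU : U ∈ unitaryGroup m 𝕜) (hV : V ∈ unitaryGroup n 𝕜) (A : Matrix m n 𝕜) :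
    ∑ i, ∑ j, ‖(U * A * V) i j‖ ^ 2 = ∑ i, ∑ j, ‖A i j‖ ^ 2 := by
  have hUU : Uᴴ * U = 1 := hU.1
  have hVV : V * Vᴴ = 1 := hV.2
  have htrace : ((U * A * V)ᴴ * (U * A * V)).trace = (Aᴴ * A).trace := by
    simp only [conjTranspose_mul, Matrix.mul_assoc]
    rw [← Matrix.mul_assoc Uᴴ, hUU, Matrix.one_mul, trace_mul_comm, Matrix.mul_assoc,
      Matrix.mul_assoc, hVV, Matrix.mul_one]
  rw [trace_conjTranspose_mul_self_eq, trace_conjTranspose_mul_self_eq] at htrace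
  exact_mod_cast htrace

theorem norm_sq_entries_mem_doublyStochastic {W : Matrix n n 𝕜} (hW : W ∈ unitaryGroup n 𝕜) :
    of (fun i j => ‖W i j‖ ^ 2) ∈ doublyStochastic ℝ n := by
  refine mem_doublyStochastic_iff_sum.2 ⟨fun i j => sq_nonneg _, fun i => ?_, fun j => ?_⟩
  · have hrow := congr_fun₂ (show W * Wᴴ = 1 from hW.2) i i
    rw [mul_conjTranspose_self_apply_self, one_apply_eq] at hrow
    exact_mod_cast hrow
  · have hcol := congr_fun₂ (show Wᴴ * W = 1 from hW.1) j j
    rw [conjTranspose_mul_self_apply_self, one_apply_eq] at hcol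
    exact_mod_cast hcol

theorem star_mul_sub_mul_eq_of_mem_unitaryGroup {U₁ U₂ : Matrix n n 𝕜}
    (hU₁ : U₁ ∈ unitaryGroup n 𝕜) (hU₂ : U₂ ∈ unitaryGroup n 𝕜) (a b : n → 𝕜) :
    star U₁ * (U₁ * diagonal a * star U₁ - U₂ * diagonal b * star U₂) * U₂ =
      of fun i j => (star U₁ * U₂) i j * (a i - b j) := by
  have h₁ : star U₁ * U₁ = 1 := hU₁.1
  have h₂ : star U₂ * U₂ = 1 := hU₂.1
  simp only [Matrix.mul_sub, Matrix.sub_mul, Matrix.mul_assoc]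
  rw [← Matrix.mul_assoc (star U₁) U₁, h₁, h₂, Matrix.one_mul, Matrix.mul_one,
    ← Matrix.mul_assoc (star U₁) U₂]
  ext i j
  simp only [sub_apply, diagonal_mul, mul_diagonal, of_apply]
  ring

theorem exists_perm_sum_norm_sq_sub_le_of_mem_unitaryGroup {U₁ U₂ : Matrix n n 𝕜}
    (hU₁ : U₁ ∈ unitaryGroup n 𝕜) (hU₂ : U₂ ∈ unitaryGroup n 𝕜) (a b : n → 𝕜) :
    ∃ σ : Equiv.Perm n, ∑ i, ‖a i - b (σ i)‖ ^ 2 ≤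
      ∑ i, ∑ j, ‖(U₁ * diagonal a * star U₁ - U₂ * diagonal b * star U₂) i j‖ ^ 2 := by
  have hU₁' : star U₁ ∈ unitaryGroup n 𝕜 := Unitary.star_mem hU₁
  obtain ⟨σ, hσ⟩ := exists_perm_sum_le_sum_mul_of_mem_doublyStochastic
    (norm_sq_entries_mem_doublyStochastic (mul_mem hU₁' hU₂)) (of fun i j => ‖a i - b j‖ ^ 2)
  refine ⟨σ, hσ.trans_eq ?_⟩
  rw [← sum_sum_norm_sq_unitary_mul_mul_unitary hU₁' hU₂,
    star_mul_sub_mul_eq_of_mem_unitaryGroup hU₁ hU₂]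
  simp [norm_mul, mul_pow]

end Matrix

theorem eigenvalue_matching_frobenius_bound_general (n : ℕ)
    (F G U₁ U₂ : Matrix (Fin n) (Fin n) ℂ) (lam mu : Fin n → ℂ)
    (hU₁ : U₁ ∈ Matrix.unitaryGroup (Fin n) ℂ) (hU₂ : U₂ ∈ Matrix.unitaryGroup (Fin n) ℂ)
    (hFd : F = U₁ * Matrix.diagonal lam * star U₁)
    (hGd : G = U₂ * Matrix.diagonal mu * star U₂) :
    ∃ σ : Equiv.Perm (Fin n),
      Real.sqrt (∑ i, ‖lam i - mu (σ i)‖ ^ 2) ≤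
        Real.sqrt (∑ i, ∑ j, ‖(F - G) i j‖ ^ 2) := by
  subst hFd hGd
  obtain ⟨σ, hσ⟩ := exists_perm_sum_norm_sq_sub_le_of_mem_unitaryGroup hU₁ hU₂ lam mu
  exact ⟨σ, Real.sqrt_le_sqrt hσ⟩

/-- If `F = U₁ D(λ) U₁*` and `G = U₂ D(μ) U₂*` are unitary matrices with unimodular
eigenvalue vectors `λ, μ`, then some permutation matching of the eigenvalues satisfies
`‖λ - σ(μ)‖ ≤ ‖F - G‖` (Frobenius norm). -/
theorem eigenvalue_matching_frobenius_bound (n : ℕ)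
    (F G U₁ U₂ : Matrix (Fin n) (Fin n) ℂ) (lam mu : Fin n → ℂ)
    (hF : F ∈ Matrix.unitaryGroup (Fin n) ℂ) (hG : G ∈ Matrix.unitaryGroup (Fin n) ℂ)
    (hU₁ : U₁ ∈ Matrix.unitaryGroup (Fin n) ℂ) (hU₂ : U₂ ∈ Matrix.unitaryGroup (Fin n) ℂ)
    (hlam : ∀ i, ‖lam i‖ = 1) (hmu : ∀ i, ‖mu i‖ = 1)
    (hFd : F = U₁ * Matrix.diagonal lam * star U₁)
    (hGd : G = U₂ * Matrix.diagonal mu * star U₂) :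
    ∃ σ : Equiv.Perm (Fin n),
      Real.sqrt (∑ i, ‖lam i - mu (σ i)‖ ^ 2) ≤
        Real.sqrt (∑ i, ∑ j, ‖(F - G) i j‖ ^ 2) :=
  eigenvalue_matching_frobenius_bound_general n F G U₁ U₂ lam mu hU₁ hU₂ hFd hGd
end

section
/- For real diagonal matrices: if λ, μ ∈ ℝⁿ and U ∈ U(n), then tr(D(λ)* U D(μ) U* + (U D(μ) U*)* D(λ)) is a convex combination ∑ αᵢ (λᵀPᵢμ + (Pᵢμ)ᵀλ) over permutation matrices Pᵢ, and consequently ‖D(λ) - U D(μ) U*‖² ≥ min over permutations σ of ‖λ - σ(μ)‖². -/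
/-!
The diagonal of `U D(μ) U*` is `S μ` for the doubly stochastic matrix `S = (|U i j|²)`, so the
trace equals `2 λᵀ S μ`, and Birkhoff's theorem writes `S` as a convex combination of permutation
matrices. By unitary invariance of the Frobenius norm,
`‖D(λ) - U D(μ) U*‖² = ‖λ‖² + ‖μ‖² - 2 λᵀ S μ`, and the convex combination `λᵀ S μ` is at most its
largest term `λᵀ P_σ μ`, while `‖λ - σ(μ)‖² = ‖λ‖² + ‖μ‖² - 2 λᵀ P_σ μ`.
-/

open Matrix Finset

namespace Matrix

section DoublyStochastic

variable {R n : Type*} [Fintype n] [DecidableEq n] [Field R] [LinearOrder R] [IsStrictOrderedRing R]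
  {M : Matrix n n R}

theorem exists_convex_weights_dotProduct_mulVec_eq (hM : M ∈ doublyStochastic R n) (x y : n → R) :
    ∃ α : Equiv.Perm n → R, (∀ σ, 0 ≤ α σ) ∧ ∑ σ, α σ = 1 ∧
      x ⬝ᵥ M *ᵥ y = ∑ σ, α σ * x ⬝ᵥ (y ∘ σ) := by
  obtain ⟨α, hα0, hα1, rfl⟩ := exists_eq_sum_perm_of_mem_doublyStochastic hM
  refine ⟨α, hα0, hα1, ?_⟩
  simp only [sum_mulVec, smul_mulVec, permMatrix_mulVec, dotProduct_sum, dotProduct_smul,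
    smul_eq_mul]

theorem exists_perm_dotProduct_mulVec_le (hM : M ∈ doublyStochastic R n) (x y : n → R) :
    ∃ σ : Equiv.Perm n, x ⬝ᵥ M *ᵥ y ≤ x ⬝ᵥ (y ∘ σ) := by
  obtain ⟨α, hα0, hα1, hα⟩ := exists_convex_weights_dotProduct_mulVec_eq hM x y
  obtain ⟨σ, -, hσ⟩ := exists_max_image univ (fun σ : Equiv.Perm n => x ⬝ᵥ (y ∘ σ)) univ_nonempty
  refine ⟨σ, ?_⟩
  calc x ⬝ᵥ M *ᵥ y = ∑ τ, α τ * x ⬝ᵥ (y ∘ τ) := hα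
    _ ≤ ∑ τ, α τ * x ⬝ᵥ (y ∘ σ) :=
        sum_le_sum fun τ _ => mul_le_mul_of_nonneg_left (hσ τ (mem_univ τ)) (hα0 τ)
    _ = x ⬝ᵥ (y ∘ σ) := by rw [← sum_mul, hα1, one_mul]

end DoublyStochastic

theorem sum_sub_comp_perm_sq {R n : Type*} [Fintype n] [CommRing R] (x y : n → R)
    (σ : Equiv.Perm n) :
    ∑ i, (x i - y (σ i)) ^ 2 = ∑ i, x i ^ 2 + ∑ i, y i ^ 2 - 2 * x ⬝ᵥ (y ∘ σ) := by
  rw [← Equiv.sum_comp σ (fun i => y i ^ 2), dotProduct, mul_sum, ← sum_add_distrib,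
    ← sum_sub_distrib]
  exact sum_congr rfl fun i _ => by simp only [Function.comp_apply]; ring

theorem trace_conjTranspose_sub_mul_sub {R n : Type*} [Fintype n] [Ring R] [StarRing R]
    (X Y : Matrix n n R) :
    trace ((X - Y)ᴴ * (X - Y)) = trace (Xᴴ * X) + trace (Yᴴ * Y) - trace (Xᴴ * Y + Yᴴ * X) := by
  rw [conjTranspose_sub, Matrix.sub_mul, Matrix.mul_sub, Matrix.mul_sub, trace_sub, trace_sub,
    trace_sub, trace_add]
  abel

theorem trace_conjTranspose_mul_self_unitary_conj {R n : Type*} [Fintype n] [DecidableEq n]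
    [CommRing R] [StarRing R] {U : Matrix n n R} (hU : U ∈ unitaryGroup n R) (B : Matrix n n R) :
    trace ((U * B * star U)ᴴ * (U * B * star U)) = trace (Bᴴ * B) := by
  have hUU : Uᴴ * U = 1 := hU.1
  rw [star_eq_conjTranspose, conjTranspose_mul, conjTranspose_mul, conjTranspose_conjTranspose]
  calc trace (U * (Bᴴ * Uᴴ) * (U * B * Uᴴ))
      = trace (Bᴴ * (Uᴴ * U) * B * (Uᴴ * U)) := by
        rw [Matrix.mul_assoc, trace_mul_comm]; simp only [Matrix.mul_assoc]
    _ = trace (Bᴴ * B) := by rw [hUU, Matrix.mul_one, Matrix.mul_one]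

variable {𝕜 : Type*} [RCLike 𝕜]

theorem re_trace_conjTranspose_mul_self {m n : Type*} [Fintype m] [Fintype n]
    (A : Matrix m n 𝕜) :
    RCLike.re (trace (Aᴴ * A)) = ∑ i, ∑ j, ‖A i j‖ ^ 2 := by
  simp only [trace, diag_apply, mul_apply, conjTranspose_apply, RCLike.star_def, RCLike.conj_mul,
    ← RCLike.ofReal_pow, ← RCLike.ofReal_sum, RCLike.ofReal_re]
  exact sum_comm

variable {n : Type*} [Fintype n] [DecidableEq n]

theorem trace_conjTranspose_diagonal_mul_self (lam : n → ℝ) :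
    trace ((diagonal fun i => (lam i : 𝕜))ᴴ * diagonal fun i => (lam i : 𝕜)) =
      ((∑ i, lam i ^ 2 : ℝ) : 𝕜) := by
  simp [diagonal_conjTranspose, diagonal_mul_diagonal, trace_diagonal, sq]

theorem trace_conjTranspose_diagonal_mul_add (lam : n → ℝ) (A : Matrix n n 𝕜) :
    trace ((diagonal fun i => (lam i : 𝕜))ᴴ * A + Aᴴ * diagonal fun i => (lam i : 𝕜)) =
      ((2 * ∑ i, lam i * RCLike.re (A i i) : ℝ) : 𝕜) := by
  simp only [trace, diag_apply, add_apply, diagonal_conjTranspose, diagonal_mul, mul_diagonal,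
    conjTranspose_apply, Pi.star_apply, RCLike.star_def, RCLike.conj_ofReal]
  push_cast [mul_sum]
  refine sum_congr rfl fun i _ => ?_
  linear_combination (lam i : 𝕜) * RCLike.add_conj (A i i)

def normSqEntries {m n : Type*} (A : Matrix m n 𝕜) : Matrix m n ℝ := of fun i j => ‖A i j‖ ^ 2

@[simp]
theorem normSqEntries_apply {m n : Type*} (A : Matrix m n 𝕜) (i : m) (j : n) :
    normSqEntries A i j = ‖A i j‖ ^ 2 :=
  rfl

theorem normSqEntries_mem_doublyStochastic {U : Matrix n n 𝕜} (hU : U ∈ unitaryGroup n 𝕜) :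
    normSqEntries U ∈ doublyStochastic ℝ n := by
  have hrow (i : n) : (U * star U) i i = ((∑ j, ‖U i j‖ ^ 2 : ℝ) : 𝕜) := by
    simp [mul_apply, RCLike.mul_conj]
  have hcol (j : n) : (star U * U) j j = ((∑ i, ‖U i j‖ ^ 2 : ℝ) : 𝕜) := by
    simp [mul_apply, RCLike.conj_mul]
  rw [mem_doublyStochastic_iff_sum]
  simp only [normSqEntries_apply]
  refine ⟨fun i j => by positivity, fun i => ?_, fun j => ?_⟩
  · have h := congrFun (congrFun hU.2 i) i
    rw [hrow, one_apply_eq] at h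
    exact_mod_cast h
  · have h := congrFun (congrFun hU.1 j) j
    rw [hcol, one_apply_eq] at h
    exact_mod_cast h

theorem mul_diagonal_mul_star_apply_self (U : Matrix n n 𝕜) (mu : n → ℝ) (i : n) :
    (U * diagonal (fun j => (mu j : 𝕜)) * star U) i i = ((normSqEntries U *ᵥ mu) i : 𝕜) := by
  rw [mul_apply]
  simp only [mul_diagonal, star_apply, RCLike.star_def, mulVec, dotProduct, normSqEntries_apply]
  push_cast
  refine sum_congr rfl fun j _ => ?_
  rw [mul_right_comm, RCLike.mul_conj]

theorem trace_conjTranspose_diagonal_mul_unitary_conj_add (U : Matrix n n 𝕜) (lam mu : n → ℝ) :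
    trace ((diagonal fun i => (lam i : 𝕜))ᴴ * (U * diagonal (fun i => (mu i : 𝕜)) * star U) +
        (U * diagonal (fun i => (mu i : 𝕜)) * star U)ᴴ * diagonal fun i => (lam i : 𝕜)) =
      ((2 * lam ⬝ᵥ normSqEntries U *ᵥ mu : ℝ) : 𝕜) := by
  simp only [trace_conjTranspose_diagonal_mul_add, mul_diagonal_mul_star_apply_self,
    RCLike.ofReal_re, dotProduct]

theorem sum_norm_sq_diagonal_sub_unitary_conj {U : Matrix n n 𝕜} (hU : U ∈ unitaryGroup n 𝕜)
    (lam mu : n → ℝ) :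
    ∑ i, ∑ j,
        ‖(diagonal (fun i => (lam i : 𝕜)) - U * diagonal (fun i => (mu i : 𝕜)) * star U) i j‖ ^ 2 =
      ∑ i, lam i ^ 2 + ∑ i, mu i ^ 2 - 2 * lam ⬝ᵥ normSqEntries U *ᵥ mu := by
  rw [← re_trace_conjTranspose_mul_self, trace_conjTranspose_sub_mul_sub,
    trace_conjTranspose_mul_self_unitary_conj hU, trace_conjTranspose_diagonal_mul_self,
    trace_conjTranspose_diagonal_mul_self, trace_conjTranspose_diagonal_mul_unitary_conj_add]
  simp only [← RCLike.ofReal_add, ← RCLike.ofReal_sub, RCLike.ofReal_re]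

end Matrix

/-- For real vectors `λ, μ` and unitary `U`, the trace
`tr(D(λ)* U D(μ) U* + (U D(μ) U*)* D(λ))` is a convex combination
`∑ ασ (λᵀ Pσ μ + (Pσ μ)ᵀ λ)` over permutations, and consequently
`‖D(λ) - U D(μ) U*‖² ≥ min_σ ‖λ - σ(μ)‖²`. -/
theorem trace_convex_combination_and_eigenvalue_bound (n : ℕ)
    (lam mu : Fin n → ℝ) (U : Matrix (Fin n) (Fin n) ℂ)
    (hU : U ∈ Matrix.unitaryGroup (Fin n) ℂ) :
    (∃ α : Equiv.Perm (Fin n) → ℝ, (∀ σ, 0 ≤ α σ) ∧ (∑ σ, α σ) = 1 ∧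
      Matrix.trace ((Matrix.diagonal fun i => (lam i : ℂ))ᴴ *
            (U * (Matrix.diagonal fun i => (mu i : ℂ)) * star U) +
          (U * (Matrix.diagonal fun i => (mu i : ℂ)) * star U)ᴴ *
            (Matrix.diagonal fun i => (lam i : ℂ))) =
        ((∑ σ : Equiv.Perm (Fin n), α σ *
            ((∑ i, lam i * mu (σ i)) + (∑ i, mu (σ i) * lam i)) : ℝ) : ℂ)) ∧
    (∃ σ : Equiv.Perm (Fin n),
      (∑ i, (lam i - mu (σ i)) ^ 2) ≤
        ∑ i, ∑ j, ‖((Matrix.diagonal fun i => (lam i : ℂ)) -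
            U * (Matrix.diagonal fun i => (mu i : ℂ)) * star U) i j‖ ^ 2) := by
  have hS := normSqEntries_mem_doublyStochastic hU
  -- The lemmas use `RCLike.ofReal`, which is `Complex.ofReal` only up to unfolding, so they are
  -- applied by unification rather than by `rw`.
  constructor
  · obtain ⟨α, hα0, hα1, hα⟩ := exists_convex_weights_dotProduct_mulVec_eq hS lam mu
    refine ⟨α, hα0, hα1, ?_⟩
    refine (trace_conjTranspose_diagonal_mul_unitary_conj_add U lam mu).trans
      (congrArg Complex.ofReal ?_)
    rw [hα, mul_sum]
    refine sum_congr rfl fun σ _ => ?_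
    change _ = α σ * (lam ⬝ᵥ (mu ∘ σ) + (mu ∘ σ) ⬝ᵥ lam)
    rw [dotProduct_comm (mu ∘ σ)]
    ring
  · obtain ⟨σ, hσ⟩ := exists_perm_dotProduct_mulVec_le hS lam mu
    refine ⟨σ, ?_⟩
    rw [sum_sub_comp_perm_sq]
    refine le_of_le_of_eq ?_ (sum_norm_sq_diagonal_sub_unitary_conj hU lam mu).symm
    linarith
end

section
/- Let W = exp(-iπ I_y S_y)·exp(-i(π/2) I_z) ∈ SU(4), where I_α = σ_α⊗1, S_β = 1⊗σ_β. Then conjugation by W maps the subalgebra 𝔨 = span{-iI_α, -iS_β} onto so(4) (real skew-symmetric 4×4 matrices) and maps 𝔭 = span{-iI_αS_β} onto the set of matrices -iA with A traceless real symmetric. -/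
/-!
Both exponents defining `W` are diagonalised by one change of basis: `-i(π/2) I_z` is already
diagonal with entries `∓iπ/4`, and `-iπ I_y S_y` is conjugate to the same diagonal matrix `D`.
Hence `W = P e^D P⁻¹ e^D`, and the relations `e^{-iπ/4} e^{iπ/4} = 1`, `e^{∓iπ/2} = ∓i` make `W`
an explicit unitary with entries `0, ±(1 ± i)/2` (the magic basis). Conjugation by `W` is
`ℝ`-linear, so it maps the span of the generators of `𝔨` (resp. `𝔭`) onto the span of their
images. These images are real skew-symmetric matrices (resp. `-i` times real traceless symmetric
ones), and every element of `so(4)` (resp. every traceless symmetric matrix) is an explicit real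
combination of them.
-/

open Matrix Kronecker

noncomputable def pauli : Fin 3 → Matrix (Fin 2) (Fin 2) ℂ
  | 0 => (1 / 2 : ℂ) • !![0, 1; 1, 0]
  | 1 => (1 / 2 : ℂ) • !![0, -Complex.I; Complex.I, 0]
  | 2 => (1 / 2 : ℂ) • !![1, 0; 0, -1]

/-- `𝔨 = span{-i I_α, -i S_β}`. -/
noncomputable def localAlg : Submodule ℝ (Matrix (Fin 2 × Fin 2) (Fin 2 × Fin 2) ℂ) :=
  Submodule.span ℝ
    (Set.range (fun α : Fin 3 =>
        (-Complex.I) • (pauli α ⊗ₖ (1 : Matrix (Fin 2) (Fin 2) ℂ))) ∪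
     Set.range (fun β : Fin 3 =>
        (-Complex.I) • ((1 : Matrix (Fin 2) (Fin 2) ℂ) ⊗ₖ pauli β)))

/-- `𝔭 = span{-i I_α S_β}`. -/
noncomputable def nonlocalAlg : Submodule ℝ (Matrix (Fin 2 × Fin 2) (Fin 2 × Fin 2) ℂ) :=
  Submodule.span ℝ
    (Set.range (fun p : Fin 3 × Fin 3 => (-Complex.I) • (pauli p.1 ⊗ₖ pauli p.2)))

/-- `W = exp(-iπ I_y S_y) exp(-i(π/2) I_z)`. -/
noncomputable def Wmagic : Matrix (Fin 2 × Fin 2) (Fin 2 × Fin 2) ℂ :=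
  NormedSpace.exp ((-(Real.pi : ℂ) * Complex.I) • (pauli 1 ⊗ₖ pauli 1)) *
    NormedSpace.exp ((-((Real.pi : ℂ) / 2) * Complex.I) •
      (pauli 2 ⊗ₖ (1 : Matrix (Fin 2) (Fin 2) ℂ)))

open Complex Submodule
open scoped Real

section Conjugation

variable {R A ι : Type*} [CommSemiring R] [Semiring A] [Algebra R A]

theorem image_conj_span_range {W W' : A} (hW : W * W' = 1) {b c : ι → A}
    (h : ∀ i, W * b i = c i * W) :
    (fun X => W * X * W') '' span R (Set.range b) = span R (Set.range c) := by
  let f : A →ₗ[R] A := (LinearMap.mulRight R W').comp (LinearMap.mulLeft R W)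
  have hfb : f ∘ b = c := funext fun i => by
    change W * b i * W' = c i
    rw [h, mul_assoc, hW, mul_one]
  change f '' _ = _
  rw [← map_coe, map_span, ← Set.range_comp, hfb]

theorem coe_span_range_comp {M N : Type*} [AddCommMonoid M] [Module R M] [AddCommMonoid N]
    [Module R N] (f : M →ₗ[R] N) {b : ι → M} {S : Submodule R M} (h : span R (Set.range b) = S) :
    (span R (Set.range (f ∘ b)) : Set N) = f '' S := by
  rw [Set.range_comp, ← map_span, h, map_coe]

end Conjugation

section AdjointMatrices

variable {n R : Type*} [Fintype n] [DecidableEq n] [CommRing R]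

theorem mem_skewAdjointMatricesSubmodule_one {A : Matrix n n R} :
    A ∈ skewAdjointMatricesSubmodule (1 : Matrix n n R) ↔ Aᵀ = -A := by
  simp [Matrix.IsSkewAdjoint, IsAdjointPair]

variable (n R) in
def symmTraceless : Submodule R (Matrix n n R) :=
  selfAdjointMatricesSubmodule 1 ⊓ LinearMap.ker (traceLinearMap n R R)

theorem mem_symmTraceless {A : Matrix n n R} :
    A ∈ symmTraceless n R ↔ Aᵀ = A ∧ A.trace = 0 := by
  simp [symmTraceless, Matrix.IsSelfAdjoint, IsAdjointPair]

end AdjointMatrices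

/-- Reads a `4 × 4` matrix in the basis `|00⟩, |01⟩, |10⟩, |11⟩`, the order used by `⊗ₖ`. -/
def ofFin4 {α : Type*} (M : Matrix (Fin 4) (Fin 4) α) : Matrix (Fin 2 × Fin 2) (Fin 2 × Fin 2) α :=
  M.submatrix finProdFinEquiv finProdFinEquiv

@[simp] lemma ofFin4_apply {α : Type*} (M : Matrix (Fin 4) (Fin 4) α) (i j : Fin 2 × Fin 2) :
    ofFin4 M i j = M (finProdFinEquiv i) (finProdFinEquiv j) := rfl

noncomputable def magicW : Matrix (Fin 2 × Fin 2) (Fin 2 × Fin 2) ℂ :=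
  (1 / 2 : ℂ) • ofFin4 !![1 - I, 0, 0, -(1 - I);
                           0, 1 - I, 1 - I, 0;
                           0, -(1 + I), 1 + I, 0;
                           1 + I, 0, 0, 1 + I]

lemma magicW_mul_conjTranspose : magicW * magicWᴴ = 1 := by
  ext ⟨p1, p2⟩ ⟨q1, q2⟩
  fin_cases p1 <;> fin_cases p2 <;> fin_cases q1 <;> fin_cases q2 <;>
    simp [magicW, mul_apply, Fintype.sum_prod_type, Fin.sum_univ_two, one_apply,
      finProdFinEquiv, Complex.ext_iff] <;> norm_num

noncomputable def yyEigenbasis : Matrix (Fin 2 × Fin 2) (Fin 2 × Fin 2) ℂ :=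
  ofFin4 !![1, 0, 0, 1; 0, 1, 1, 0; 0, 1, -1, 0; -1, 0, 0, 1]

noncomputable def yyEigenbasisInv : Matrix (Fin 2 × Fin 2) (Fin 2 × Fin 2) ℂ :=
  (1 / 2 : ℂ) • ofFin4 !![1, 0, 0, -1; 0, 1, 1, 0; 0, 1, -1, 0; 1, 0, 0, 1]

lemma yyEigenbasis_mul_inv : yyEigenbasis * yyEigenbasisInv = 1 := by
  ext ⟨p1, p2⟩ ⟨q1, q2⟩
  fin_cases p1 <;> fin_cases p2 <;> fin_cases q1 <;> fin_cases q2 <;>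
    simp [yyEigenbasis, yyEigenbasisInv, mul_apply, Fintype.sum_prod_type, Fin.sum_univ_two,
      one_apply, finProdFinEquiv] <;> norm_num

noncomputable def izPhases (p : Fin 2 × Fin 2) : ℂ := ![-(π / 4 * I), π / 4 * I] p.1

lemma exponent_Iz_eq_diagonal :
    (-((Real.pi : ℂ) / 2) * I) • (pauli 2 ⊗ₖ (1 : Matrix (Fin 2) (Fin 2) ℂ)) =
      diagonal izPhases := by
  ext ⟨p1, p2⟩ ⟨q1, q2⟩
  fin_cases p1 <;> fin_cases p2 <;> fin_cases q1 <;> fin_cases q2 <;>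
    simp [pauli, izPhases, diagonal, one_apply] <;> ring

lemma exponent_IySy_eq_conj_diagonal : (-(Real.pi : ℂ) * I) • (pauli 1 ⊗ₖ pauli 1) =
    yyEigenbasis * diagonal izPhases * yyEigenbasisInv := by
  ext ⟨p1, p2⟩ ⟨q1, q2⟩
  fin_cases p1 <;> fin_cases p2 <;> fin_cases q1 <;> fin_cases q2 <;>
    simp [pauli, izPhases, yyEigenbasis, yyEigenbasisInv, mul_apply, diagonal,
      Fintype.sum_prod_type, Fin.sum_univ_two, finProdFinEquiv] <;>
    grind [I_sq]

lemma exp_izPhases :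
    NormedSpace.exp izPhases = fun p => ![exp (-(π / 4 * I)), exp (π / 4 * I)] p.1 := by
  rw [Pi.exp_def]
  funext ⟨p1, p2⟩
  fin_cases p1 <;> simp [izPhases, ← Complex.exp_eq_exp_ℂ]

lemma yyEigenbasis_mul_phases {u v : ℂ} (huv : u * v = 1) (hu : u ^ 2 = -I) (hv : v ^ 2 = I) :
    yyEigenbasis * diagonal (fun p => ![u, v] p.1) * yyEigenbasisInv *
      diagonal (fun p => ![u, v] p.1) = magicW := by
  ext ⟨p1, p2⟩ ⟨q1, q2⟩
  fin_cases p1 <;> fin_cases p2 <;> fin_cases q1 <;> fin_cases q2 <;>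
    simp [yyEigenbasis, yyEigenbasisInv, magicW, mul_apply, Fintype.sum_prod_type,
      Fin.sum_univ_two, diagonal, finProdFinEquiv] <;> grind

lemma Wmagic_eq_magicW : Wmagic = magicW := by
  have hinv : yyEigenbasis⁻¹ = yyEigenbasisInv := inv_eq_right_inv yyEigenbasis_mul_inv
  have hunit : IsUnit yyEigenbasis := by
    rw [isUnit_iff_isUnit_det]; exact isUnit_det_of_right_inverse yyEigenbasis_mul_inv
  rw [Wmagic, exponent_IySy_eq_conj_diagonal, exponent_Iz_eq_diagonal, ← hinv,
    exp_conj _ _ hunit, exp_diagonal, exp_izPhases, hinv]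
  apply yyEigenbasis_mul_phases
  · rw [← Complex.exp_add, neg_add_cancel, Complex.exp_zero]
  · rw [← Complex.exp_nat_mul,
      show ((2 : ℕ) : ℂ) * -(π / 4 * I) = -(π / 2 * I) by push_cast; ring,
      Complex.exp_neg, exp_pi_div_two_mul_I, inv_I]
  · rw [← Complex.exp_nat_mul, show ((2 : ℕ) : ℂ) * (π / 4 * I) = π / 2 * I by push_cast; ring,
      exp_pi_div_two_mul_I]

noncomputable def localGen : Fin 3 ⊕ Fin 3 → Matrix (Fin 2 × Fin 2) (Fin 2 × Fin 2) ℂ :=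
  Sum.elim (fun α => (-I) • (pauli α ⊗ₖ (1 : Matrix (Fin 2) (Fin 2) ℂ)))
    (fun β => (-I) • ((1 : Matrix (Fin 2) (Fin 2) ℂ) ⊗ₖ pauli β))

lemma localAlg_eq_span_range : localAlg = span ℝ (Set.range localGen) := by
  rw [localAlg, localGen, Set.Sum.elim_range]

noncomputable def skewGen : Fin 3 ⊕ Fin 3 → Matrix (Fin 2 × Fin 2) (Fin 2 × Fin 2) ℝ
  | .inl 0 => (1 / 2 : ℝ) • ofFin4 !![0, 0, -1, 0; 0, 0, 0, -1; 1, 0, 0, 0; 0, 1, 0, 0]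
  | .inl 1 => (1 / 2 : ℝ) • ofFin4 !![0, -1, 0, 0; 1, 0, 0, 0; 0, 0, 0, 1; 0, 0, -1, 0]
  | .inl 2 => (1 / 2 : ℝ) • ofFin4 !![0, 0, 0, -1; 0, 0, 1, 0; 0, -1, 0, 0; 1, 0, 0, 0]
  | .inr 0 => (1 / 2 : ℝ) • ofFin4 !![0, 0, 1, 0; 0, 0, 0, -1; -1, 0, 0, 0; 0, 1, 0, 0]
  | .inr 1 => (1 / 2 : ℝ) • ofFin4 !![0, -1, 0, 0; 1, 0, 0, 0; 0, 0, 0, -1; 0, 0, 1, 0]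
  | .inr 2 => (1 / 2 : ℝ) • ofFin4 !![0, 0, 0, -1; 0, 0, -1, 0; 0, 1, 0, 0; 1, 0, 0, 0]

set_option maxHeartbeats 1000000 in
lemma magicW_mul_localGen (i : Fin 3 ⊕ Fin 3) :
    magicW * localGen i = (skewGen i).map ofReal * magicW := by
  rcases i with α | α <;> fin_cases α <;> ext ⟨p1, p2⟩ ⟨q1, q2⟩ <;>
    fin_cases p1 <;> fin_cases p2 <;> fin_cases q1 <;> fin_cases q2 <;>
    simp [magicW, localGen, skewGen, pauli, mul_apply, Fintype.sum_prod_type, Fin.sum_univ_two,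
      one_apply, finProdFinEquiv] <;> grind [I_sq]

lemma skewGen_transpose (i : Fin 3 ⊕ Fin 3) : (skewGen i)ᵀ = -skewGen i := by
  rcases i with α | α <;> fin_cases α <;> ext ⟨p1, p2⟩ ⟨q1, q2⟩ <;>
    fin_cases p1 <;> fin_cases p2 <;> fin_cases q1 <;> fin_cases q2 <;>
    simp [skewGen, finProdFinEquiv]

lemma span_skewGen : span ℝ (Set.range skewGen) = skewAdjointMatricesSubmodule 1 := by
  refine le_antisymm (span_le.2 <| Set.range_subset_iff.2 fun i =>
    mem_skewAdjointMatricesSubmodule_one.2 (skewGen_transpose i)) fun A hA => ?_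
  rw [mem_skewAdjointMatricesSubmodule_one] at hA
  rw [mem_span_range_iff_exists_fun]
  refine ⟨Sum.elim
    ![A (1,0) (0,0) + A (1,1) (0,1), A (0,1) (0,0) - A (1,1) (1,0), A (1,1) (0,0) - A (1,0) (0,1)]
    ![A (1,1) (0,1) - A (1,0) (0,0), A (0,1) (0,0) + A (1,1) (1,0), A (1,1) (0,0) + A (1,0) (0,1)],
    ?_⟩
  ext ⟨p1, p2⟩ ⟨q1, q2⟩
  have hpq : A (q1, q2) (p1, p2) = -A (p1, p2) (q1, q2) := congr_fun (congr_fun hA _) _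
  fin_cases p1 <;> fin_cases p2 <;> fin_cases q1 <;> fin_cases q2 <;>
    simp [skewGen, Fintype.sum_sum_type, Fin.sum_univ_three, finProdFinEquiv] at hpq ⊢ <;>
    linarith

noncomputable def symmTracelessGen : Fin 3 × Fin 3 → Matrix (Fin 2 × Fin 2) (Fin 2 × Fin 2) ℝ
  | (0, 0) => (1 / 4 : ℝ) • ofFin4 !![-1, 0, 0, 0; 0, 1, 0, 0; 0, 0, -1, 0; 0, 0, 0, 1]
  | (0, 1) => (1 / 4 : ℝ) • ofFin4 !![0, 0, 0, -1; 0, 0, 1, 0; 0, 1, 0, 0; -1, 0, 0, 0]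
  | (0, 2) => (1 / 4 : ℝ) • ofFin4 !![0, 1, 0, 0; 1, 0, 0, 0; 0, 0, 0, 1; 0, 0, 1, 0]
  | (1, 0) => (1 / 4 : ℝ) • ofFin4 !![0, 0, 0, -1; 0, 0, -1, 0; 0, -1, 0, 0; -1, 0, 0, 0]
  | (1, 1) => (1 / 4 : ℝ) • ofFin4 !![1, 0, 0, 0; 0, 1, 0, 0; 0, 0, -1, 0; 0, 0, 0, -1]
  | (1, 2) => (1 / 4 : ℝ) • ofFin4 !![0, 0, -1, 0; 0, 0, 0, 1; -1, 0, 0, 0; 0, 1, 0, 0]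
  | (2, 0) => (1 / 4 : ℝ) • ofFin4 !![0, 1, 0, 0; 1, 0, 0, 0; 0, 0, 0, -1; 0, 0, -1, 0]
  | (2, 1) => (1 / 4 : ℝ) • ofFin4 !![0, 0, 1, 0; 0, 0, 0, 1; 1, 0, 0, 0; 0, 1, 0, 0]
  | (2, 2) => (1 / 4 : ℝ) • ofFin4 !![1, 0, 0, 0; 0, -1, 0, 0; 0, 0, -1, 0; 0, 0, 0, 1]

set_option maxHeartbeats 1000000 in
lemma magicW_mul_nonlocalGen (p : Fin 3 × Fin 3) :
    magicW * ((-I) • (pauli p.1 ⊗ₖ pauli p.2)) =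
      ((-I) • (symmTracelessGen p).map ofReal) * magicW := by
  rcases p with ⟨α, β⟩
  fin_cases α <;> fin_cases β <;> ext ⟨p1, p2⟩ ⟨q1, q2⟩ <;>
    fin_cases p1 <;> fin_cases p2 <;> fin_cases q1 <;> fin_cases q2 <;>
    simp [magicW, symmTracelessGen, pauli, mul_apply, Fintype.sum_prod_type, Fin.sum_univ_two,
      finProdFinEquiv] <;> grind [I_sq]

lemma symmTracelessGen_transpose (p : Fin 3 × Fin 3) :
    (symmTracelessGen p)ᵀ = symmTracelessGen p := by
  rcases p with ⟨α, β⟩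
  fin_cases α <;> fin_cases β <;> ext ⟨p1, p2⟩ ⟨q1, q2⟩ <;>
    fin_cases p1 <;> fin_cases p2 <;> fin_cases q1 <;> fin_cases q2 <;>
    simp [symmTracelessGen, finProdFinEquiv]

lemma trace_symmTracelessGen (p : Fin 3 × Fin 3) : (symmTracelessGen p).trace = 0 := by
  rcases p with ⟨α, β⟩
  fin_cases α <;> fin_cases β <;>
    simp [symmTracelessGen, trace, Fintype.sum_prod_type, Fin.sum_univ_two, finProdFinEquiv]

lemma span_symmTracelessGen :
    span ℝ (Set.range symmTracelessGen) = symmTraceless (Fin 2 × Fin 2) ℝ := by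
  refine le_antisymm (span_le.2 <| Set.range_subset_iff.2 fun p => mem_symmTraceless.2
    ⟨symmTracelessGen_transpose p, trace_symmTracelessGen p⟩) fun A hA => ?_
  obtain ⟨hsymm, htr⟩ := mem_symmTraceless.1 hA
  simp only [trace, diag, Fintype.sum_prod_type, Fin.sum_univ_two] at htr
  rw [mem_span_range_iff_exists_fun]
  refine ⟨fun p => ![
    ![-2 * (A (0,0) (0,0) + A (1,0) (1,0)), -2 * A (1,1) (0,0) + 2 * A (1,0) (0,1),
      2 * A (0,1) (0,0) + 2 * A (1,1) (1,0)],
    ![-2 * A (1,1) (0,0) - 2 * A (1,0) (0,1), 2 * (A (0,0) (0,0) + A (0,1) (0,1)),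
      2 * A (1,1) (0,1) - 2 * A (1,0) (0,0)],
    ![2 * A (0,1) (0,0) - 2 * A (1,1) (1,0), 2 * A (1,0) (0,0) + 2 * A (1,1) (0,1),
      -2 * (A (0,1) (0,1) + A (1,0) (1,0))]] p.1 p.2, ?_⟩
  ext ⟨p1, p2⟩ ⟨q1, q2⟩
  have hpq : A (q1, q2) (p1, p2) = A (p1, p2) (q1, q2) := congr_fun (congr_fun hsymm _) _
  fin_cases p1 <;> fin_cases p2 <;> fin_cases q1 <;> fin_cases q2 <;>
    simp [symmTracelessGen, Fintype.sum_prod_type, Fin.sum_univ_three, finProdFinEquiv]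
      at hpq ⊢ <;>
    linarith

/-- conjugation by `W` maps `𝔨` onto `so(4)` (real skew-symmetric matrices viewed
inside `su(4)`) and maps `𝔭` onto `{-iA : A real traceless symmetric}`. -/
theorem magic_basis_conjugation :
    ((fun X => Wmagic * X * Wmagic⁻¹) '' (localAlg : Set (Matrix (Fin 2 × Fin 2) (Fin 2 × Fin 2) ℂ)) =
      {X | ∃ A : Matrix (Fin 2 × Fin 2) (Fin 2 × Fin 2) ℝ, Aᵀ = -A ∧ X = A.map Complex.ofReal}) ∧
    ((fun X => Wmagic * X * Wmagic⁻¹) '' (nonlocalAlg : Set (Matrix (Fin 2 × Fin 2) (Fin 2 × Fin 2) ℂ)) =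
      {X | ∃ A : Matrix (Fin 2 × Fin 2) (Fin 2 × Fin 2) ℝ, Aᵀ = A ∧ Matrix.trace A = 0 ∧
        X = (-Complex.I) • A.map Complex.ofReal}) := by
  let φ : Matrix (Fin 2 × Fin 2) (Fin 2 × Fin 2) ℝ →ₗ[ℝ] Matrix (Fin 2 × Fin 2) (Fin 2 × Fin 2) ℂ :=
    ofRealAm.mapMatrix.toLinearMap
  have hW := magicW_mul_conjTranspose
  rw [Wmagic_eq_magicW, inv_eq_right_inv hW, localAlg_eq_span_range, nonlocalAlg,
    image_conj_span_range (c := φ ∘ skewGen) hW magicW_mul_localGen,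
    image_conj_span_range (c := ((-I) • φ) ∘ symmTracelessGen) hW magicW_mul_nonlocalGen,
    coe_span_range_comp _ span_skewGen, coe_span_range_comp _ span_symmTracelessGen]
  constructor <;> ext X <;>
    simp only [Set.mem_image, SetLike.mem_coe, mem_skewAdjointMatricesSubmodule_one,
      mem_symmTraceless, and_assoc, Set.mem_ofPred_eq]
  · exact exists_congr fun A => and_congr_right' eq_comm
  · exact exists_congr fun A => and_congr_right' (and_congr_right' eq_comm)
end

section
/- For every coupling Hamiltonian H_c = ∑_{α,β∈{x,y,z}} J_{αβ} I_α S_β with real coefficients J_{αβ}, there exists a local unitary K ∈ SU(2)⊗SU(2) and real numbers a_x ≥ a_y ≥ |a_z| such that K H_c K† = a_x I_xS_x + a_y I_yS_y + a_z I_zS_z. -/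
/-!
Conjugation by `K₁ ⊗ K₂` acts on the coefficient matrix `J` of `H_c = ∑ J_{αβ} I_α S_β` as
`J ↦ R₁ J R₂ᵀ`, where `R₁, R₂ ∈ SO(3)` are the images of `K₁, K₂` under the double cover
`SU(2) → SO(3)`, `K σ_α K† = ∑_γ (R)_{γα} σ_γ`. The cover is onto: Euler angles write every
rotation as `R_z R_y R_z`, and each elementary rotation is lifted through its half angle. So it
suffices to diagonalise `J` by two rotations. This is a singular value decomposition whose
orthogonal factors are pushed into `SO(3)` by flipping the last singular vectors; the sign lands
on the smallest singular value, which gives `a_x ≥ a_y ≥ |a_z|`.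
-/

open Matrix Kronecker

open Module InnerProductSpace

namespace LinearMap

variable {𝕜 : Type*} [RCLike 𝕜]
  {E : Type*} [NormedAddCommGroup E] [InnerProductSpace 𝕜 E] [FiniteDimensional 𝕜 E]
  {F : Type*} [NormedAddCommGroup F] [InnerProductSpace 𝕜 F] [FiniteDimensional 𝕜 F]

theorem exists_orthonormalBasis_apply_eq_singularValues_smul {n : ℕ} (T : E →ₗ[𝕜] F)
    (hE : finrank 𝕜 E = n) (hF : finrank 𝕜 F = n) :
    ∃ (v : OrthonormalBasis (Fin n) 𝕜 E) (u : OrthonormalBasis (Fin n) 𝕜 F),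
      ∀ i, T (v i) = (T.singularValues i : 𝕜) • u i := by
  have hS := T.isSymmetric_adjoint_comp_self
  set v := hS.eigenvectorBasis hE
  set σ : Fin n → ℝ := fun i => T.singularValues i
  have inner_Tv : ∀ i j, ⟪T (v i), T (v j)⟫_𝕜 = if i = j then (σ i : 𝕜) ^ 2 else 0 := by
    intro i j
    rw [← adjoint_inner_right, ← comp_apply, hS.apply_eigenvectorBasis, inner_smul_right,
      orthonormal_iff_ite.mp v.orthonormal, ← T.sq_singularValues_fin hE]
    split_ifs with h <;> simp [h, σ]
  -- `u` normalises the nonzero images `T (v i)` and is completed arbitrarily.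
  set w : Fin n → F := fun i => ((σ i)⁻¹ : 𝕜) • T (v i)
  have hw : Orthonormal 𝕜 ({i | σ i ≠ 0}.domRestrict w) := by
    rw [orthonormal_iff_ite]
    rintro ⟨i, hi⟩ ⟨j, -⟩
    simp only [Set.domRestrict_apply, w, inner_smul_left, inner_smul_right, inner_Tv,
      Subtype.mk.injEq]
    split_ifs with h
    · subst h
      have : (σ i : 𝕜) ≠ 0 := by exact_mod_cast hi
      simp only [map_inv₀, RCLike.conj_ofReal]
      field_simp
    · simp
  obtain ⟨u, hu⟩ := hw.exists_orthonormalBasis_extension_of_card_eq (by simp [hF])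
  refine ⟨v, u, fun i => ?_⟩
  by_cases hi : σ i = 0
  · have : T (v i) = 0 := by
      rw [← inner_self_eq_zero (𝕜 := 𝕜), inner_Tv, if_pos rfl]
      simp [hi]
    simp [this, show T.singularValues i = 0 from hi]
  · have : (σ i : 𝕜) ≠ 0 := by exact_mod_cast hi
    rw [hu i hi, smul_smul, mul_inv_cancel₀ this, one_smul]

end LinearMap

namespace Matrix

theorem exists_orthogonal_transpose_mul_mul_eq_diagonal {n : ℕ}
    (J : Matrix (Fin n) (Fin n) ℝ) :
    ∃ U ∈ orthogonalGroup (Fin n) ℝ, ∃ V ∈ orthogonalGroup (Fin n) ℝ, ∃ σ : Fin n → ℝ,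
      Antitone σ ∧ 0 ≤ σ ∧ Uᵀ * J * V = diagonal σ := by
  set T : EuclideanSpace ℝ (Fin n) →ₗ[ℝ] EuclideanSpace ℝ (Fin n) := toLpLin 2 2 J
  obtain ⟨v, u, hvu⟩ := T.exists_orthonormalBasis_apply_eq_singularValues_smul
    finrank_euclideanSpace_fin finrank_euclideanSpace_fin
  set e := EuclideanSpace.basisFun (Fin n) ℝ
  have hU := e.toMatrix_orthonormalBasis_mem_orthogonal u
  have hV := e.toMatrix_orthonormalBasis_mem_orthogonal v
  set σ : Fin n → ℝ := fun i => T.singularValues i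
  refine ⟨_, hU, _, hV, σ, fun i j h => T.singularValues_antitone h,
    fun i => T.singularValues_nonneg i, ?_⟩
  have hJV : J * e.toBasis.toMatrix v = e.toBasis.toMatrix u * diagonal σ := by
    ext k j
    simpa [T, e, σ, Basis.toMatrix_apply, mulVec, dotProduct, mul_apply, mul_comm,
      diagonal_apply]
      using congrArg (· k) (hvu j)
  rw [Matrix.mul_assoc, hJV, ← Matrix.mul_assoc, (mem_orthogonalGroup_iff' _ _).1 hU,
    Matrix.one_mul]

section SignFix

variable {ι : Type*} [Fintype ι] [DecidableEq ι]

theorem abs_det_eq_one_of_mem_orthogonalGroup {U : Matrix ι ι ℝ}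
    (hU : U ∈ orthogonalGroup ι ℝ) : |U.det| = 1 := by
  have : U.det * U.det = 1 := by simpa using (det_of_mem_unitary hU).1
  rwa [← abs_mul_abs_self, mul_self_eq_one_iff,
    or_iff_left (by linarith [abs_nonneg U.det])] at this

theorem diagonal_update_det_mul_transpose_mem_specialOrthogonalGroup {U : Matrix ι ι ℝ}
    (hU : U ∈ orthogonalGroup ι ℝ) (k : ι) :
    diagonal (Function.update 1 k U.det) * Uᵀ ∈ specialOrthogonalGroup ι ℝ := by
  have hd : U.det * U.det = 1 := by
    rw [← abs_mul_abs_self, abs_det_eq_one_of_mem_orthogonalGroup hU, one_mul]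
  refine ⟨mul_mem ?_ (transpose_mem_unitaryGroup_iff.2 hU), ?_⟩
  · rw [mem_orthogonalGroup_iff, diagonal_transpose, diagonal_mul_diagonal, ← diagonal_one]
    congr 1
    ext i
    rcases eq_or_ne i k with rfl | hik <;> simp [*]
  · simp [det_diagonal, Finset.prod_update_of_mem, hd]

theorem exists_specialOrthogonal_mul_mul_transpose_eq_diagonal_update {J U V : Matrix ι ι ℝ}
    {σ : ι → ℝ} (hU : U ∈ orthogonalGroup ι ℝ) (hV : V ∈ orthogonalGroup ι ℝ)
    (hJ : Uᵀ * J * V = diagonal σ) (k : ι) :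
    ∃ R₁ ∈ specialOrthogonalGroup ι ℝ, ∃ R₂ ∈ specialOrthogonalGroup ι ℝ, ∃ s : ℝ, |s| = 1 ∧
      R₁ * J * R₂ᵀ = diagonal (Function.update σ k (s * σ k)) := by
  set D : Matrix ι ι ℝ → Matrix ι ι ℝ := fun M => diagonal (Function.update 1 k M.det)
  refine ⟨_, diagonal_update_det_mul_transpose_mem_specialOrthogonalGroup hU k,
    _, diagonal_update_det_mul_transpose_mem_specialOrthogonalGroup hV k, U.det * V.det,
    ?_, ?_⟩
  · rw [abs_mul, abs_det_eq_one_of_mem_orthogonalGroup hU,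
      abs_det_eq_one_of_mem_orthogonalGroup hV, one_mul]
  · calc _ = D U * (Uᵀ * J * V) * D V := by
          simp only [D, transpose_mul, transpose_transpose, diagonal_transpose,
            Matrix.mul_assoc]
      _ = _ := by
          rw [hJ, diagonal_mul_diagonal, diagonal_mul_diagonal]
          congr 1
          ext i
          rcases eq_or_ne i k with rfl | hik <;> simp [*]
          ring

end SignFix

theorem exists_specialOrthogonal_mul_mul_transpose_eq_diagonal_fin_three
    (J : Matrix (Fin 3) (Fin 3) ℝ) :
    ∃ R₁ ∈ specialOrthogonalGroup (Fin 3) ℝ, ∃ R₂ ∈ specialOrthogonalGroup (Fin 3) ℝ,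
      ∃ a : Fin 3 → ℝ, a 0 ≥ a 1 ∧ a 1 ≥ |a 2| ∧ R₁ * J * R₂ᵀ = diagonal a := by
  obtain ⟨U, hU, V, hV, σ, hanti, hnonneg, hJ⟩ :=
    exists_orthogonal_transpose_mul_mul_eq_diagonal J
  obtain ⟨R₁, hR₁, R₂, hR₂, s, hs, hR⟩ :=
    exists_specialOrthogonal_mul_mul_transpose_eq_diagonal_update hU hV hJ 2
  refine ⟨R₁, hR₁, R₂, hR₂, _, ?_, ?_, hR⟩
  · simpa using hanti (show (0 : Fin 3) ≤ 1 by decide)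
  · simpa [abs_mul, hs, abs_of_nonneg (hnonneg 2)]
      using hanti (show (1 : Fin 3) ≤ 2 by decide)

variable {ι κ m p : Type*} [Fintype ι] [Fintype κ]

theorem sum_smul_kronecker_sum_smul (e : ι → Matrix m m ℂ) (f : κ → Matrix p p ℂ)
    (x : ι → ℝ) (y : κ → ℝ) :
    (∑ γ, x γ • e γ) ⊗ₖ (∑ δ, y δ • f δ) = ∑ γ, ∑ δ, (x γ * y δ) • (e γ ⊗ₖ f δ) := by
  change kroneckerBilinear (R := ℝ) (∑ γ, x γ • e γ) (∑ δ, y δ • f δ) = _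
  simp only [map_sum, LinearMap.sum_apply, map_smul, LinearMap.smul_apply, Finset.smul_sum,
    smul_smul]
  rw [Finset.sum_comm]
  simp_rw [mul_comm (y _)]
  rfl

variable [Fintype m] [Fintype p]

/-- For `e = pauli` and `K ∈ SU(2)`, `R` is the image of `K` under the double cover
`SU(2) → SO(3)`. -/
def ConjActsBy (e : ι → Matrix m m ℂ) (K : Matrix m m ℂ) (R : Matrix ι ι ℝ) : Prop :=
  ∀ α, K * e α * Kᴴ = ∑ γ, R γ α • e γ

namespace ConjActsBy

variable {e : ι → Matrix m m ℂ} {f : κ → Matrix p p ℂ} {K : Matrix m m ℂ} {L : Matrix p p ℂ}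
  {R : Matrix ι ι ℝ} {S : Matrix κ κ ℝ}

theorem conj_sum_smul (h : ConjActsBy e K R) (x : ι → ℝ) :
    K * (∑ α, x α • e α) * Kᴴ = ∑ γ, (R *ᵥ x) γ • e γ := by
  simp only [Matrix.mul_sum, Matrix.sum_mul, Matrix.mul_smul, Matrix.smul_mul, h _,
    Finset.smul_sum, smul_smul, mulVec, dotProduct, Finset.sum_smul]
  rw [Finset.sum_comm]
  simp_rw [mul_comm (x _)]

theorem mul {K' : Matrix m m ℂ} {R' : Matrix ι ι ℝ} (h : ConjActsBy e K R)
    (h' : ConjActsBy e K' R') : ConjActsBy e (K * K') (R * R') := by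
  intro α
  calc K * K' * e α * (K * K')ᴴ = K * (∑ β, R' β α • e β) * Kᴴ := by
        rw [conjTranspose_mul, ← h' α]; noncomm_ring
    _ = _ := by rw [h.conj_sum_smul]; rfl

/-- The index order `κ × ι` follows `Matrix.vec`, so that `Matrix.kronecker_mulVec_vec`
applies. -/
theorem kronecker (h : ConjActsBy e K R) (h' : ConjActsBy f L S) :
    ConjActsBy (fun i : κ × ι => e i.2 ⊗ₖ f i.1) (K ⊗ₖ L) (S ⊗ₖ R) := by
  rintro ⟨β, α⟩
  rw [conjTranspose_kronecker, ← mul_kronecker_mul, ← mul_kronecker_mul, h, h',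
    sum_smul_kronecker_sum_smul, Fintype.sum_prod_type_right]
  simp_rw [kronecker_apply, mul_comm (R _ _)]

theorem kronecker_conj_sum (h : ConjActsBy e K R) (h' : ConjActsBy f L S)
    (J : Matrix ι κ ℝ) :
    (K ⊗ₖ L) * (∑ α, ∑ β, J α β • (e α ⊗ₖ f β)) * (K ⊗ₖ L)ᴴ =
      ∑ γ, ∑ δ, (R * J * Sᵀ) γ δ • (e γ ⊗ₖ f δ) := by
  have := (h.kronecker h').conj_sum_smul (vec J)
  rw [kronecker_mulVec_vec] at this
  simpa only [Fintype.sum_prod_type_right, vec] using this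

end ConjActsBy

end Matrix

def rotZ (c s : ℝ) : Matrix (Fin 3) (Fin 3) ℝ := !![c, -s, 0; s, c, 0; 0, 0, 1]
def rotY (c s : ℝ) : Matrix (Fin 3) (Fin 3) ℝ := !![c, 0, s; 0, 1, 0; -s, 0, c]

theorem rotZ_mem_specialOrthogonalGroup {c s : ℝ} (h : c ^ 2 + s ^ 2 = 1) :
    rotZ c s ∈ specialOrthogonalGroup (Fin 3) ℝ := by
  refine ⟨(mem_orthogonalGroup_iff _ _).2 ?_, ?_⟩
  · ext i j
    fin_cases i <;> fin_cases j <;>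
      simp [rotZ, mul_apply, Fin.sum_univ_three, one_apply] <;> linarith
  · simp [rotZ, det_fin_three]; linarith

theorem rotY_mem_specialOrthogonalGroup {c s : ℝ} (h : c ^ 2 + s ^ 2 = 1) :
    rotY c s ∈ specialOrthogonalGroup (Fin 3) ℝ := by
  refine ⟨(mem_orthogonalGroup_iff _ _).2 ?_, ?_⟩
  · ext i j
    fin_cases i <;> fin_cases j <;>
      simp [rotY, mul_apply, Fin.sum_univ_three, one_apply] <;> linarith
  · simp [rotY, det_fin_three]; linarith

theorem exists_sphericalCoords {x y z : ℝ} (h : x ^ 2 + y ^ 2 + z ^ 2 = 1) :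
    ∃ c₁ s₁ c₂ s₂ : ℝ, c₁ ^ 2 + s₁ ^ 2 = 1 ∧ c₂ ^ 2 + s₂ ^ 2 = 1 ∧
      c₁ * s₂ = x ∧ s₁ * s₂ = y ∧ c₂ = z := by
  set w : ℂ := ⟨x, y⟩
  refine ⟨Real.cos (Complex.arg w), Real.sin (Complex.arg w), z, ‖w‖,
    Real.cos_sq_add_sin_sq _, ?_, by rw [mul_comm, Complex.norm_mul_cos_arg],
    by rw [mul_comm, Complex.norm_mul_sin_arg], rfl⟩
  rw [Complex.sq_norm, Complex.normSq_mk]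
  linarith

theorem eq_rotZ_of_col_two {Q : Matrix (Fin 3) (Fin 3) ℝ}
    (hQ : Q ∈ specialOrthogonalGroup (Fin 3) ℝ) (h02 : Q 0 2 = 0) (h12 : Q 1 2 = 0)
    (h22 : Q 2 2 = 1) :
    Q 0 0 ^ 2 + Q 1 0 ^ 2 = 1 ∧ Q = rotZ (Q 0 0) (Q 1 0) := by
  obtain ⟨hO, hdet⟩ := mem_specialOrthogonalGroup_iff.1 hQ
  have hrow := (mem_orthogonalGroup_iff _ _).1 hO
  have hcol := (mem_orthogonalGroup_iff' _ _).1 hO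
  have h22' : Q 2 0 ^ 2 + Q 2 1 ^ 2 + Q 2 2 ^ 2 = 1 := by
    simpa [mul_apply, Fin.sum_univ_three, sq] using congrFun₂ hrow 2 2
  have h00 : Q 0 0 ^ 2 + Q 1 0 ^ 2 + Q 2 0 ^ 2 = 1 := by
    simpa [mul_apply, Fin.sum_univ_three, sq] using congrFun₂ hcol 0 0
  have h01 : Q 0 0 * Q 0 1 + Q 1 0 * Q 1 1 + Q 2 0 * Q 2 1 = 0 := by
    simpa [mul_apply, Fin.sum_univ_three] using congrFun₂ hcol 0 1
  have h20 : Q 2 0 = 0 := by nlinarith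
  have h21 : Q 2 1 = 0 := by nlinarith
  rw [det_fin_three, h02, h12, h20, h21, h22] at hdet
  rw [h20] at h00 h01
  rw [h21] at h01
  have h11 : Q 1 1 = Q 0 0 := by
    linear_combination -(Q 1 1) * h00 + Q 0 0 * hdet + Q 1 0 * h01
  have h01' : Q 0 1 = -Q 1 0 := by
    linear_combination Q 0 0 * h01 - Q 1 0 * hdet - Q 0 1 * h00
  refine ⟨by linarith, ?_⟩
  ext i j
  fin_cases i <;> fin_cases j <;> simp [rotZ, *]

theorem exists_eq_rotZ_mul_rotY_mul_rotZ {R : Matrix (Fin 3) (Fin 3) ℝ}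
    (hR : R ∈ specialOrthogonalGroup (Fin 3) ℝ) :
    ∃ c₁ s₁ c₂ s₂ c₃ s₃ : ℝ,
      c₁ ^ 2 + s₁ ^ 2 = 1 ∧ c₂ ^ 2 + s₂ ^ 2 = 1 ∧ c₃ ^ 2 + s₃ ^ 2 = 1 ∧
      R = rotZ c₁ s₁ * rotY c₂ s₂ * rotZ c₃ s₃ := by
  have hRO := (mem_orthogonalGroup_iff' _ _).1 hR.1
  have hunit : R 0 2 ^ 2 + R 1 2 ^ 2 + R 2 2 ^ 2 = 1 := by
    simpa [mul_apply, Fin.sum_univ_three, sq] using congrFun₂ hRO 2 2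
  obtain ⟨c₁, s₁, c₂, s₂, h₁, h₂, hx, hy, hz⟩ := exists_sphericalCoords hunit
  set A := rotZ c₁ s₁ * rotY c₂ s₂
  have hA : A ∈ specialOrthogonalGroup (Fin 3) ℝ :=
    mul_mem (rotZ_mem_specialOrthogonalGroup h₁) (rotY_mem_specialOrthogonalGroup h₂)
  have hAR : ∀ i, A i 2 = R i 2 := by
    intro i
    fin_cases i <;> simp [A, rotZ, rotY, ← hx, ← hy, ← hz]
  set Q := Aᵀ * R
  have hQ : Q ∈ specialOrthogonalGroup (Fin 3) ℝ :=
    mul_mem (mem_specialOrthogonalGroup_iff.2 ⟨transpose_mem_unitaryGroup_iff.2 hA.1,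
      by rw [det_transpose]; exact (mem_specialOrthogonalGroup_iff.1 hA).2⟩) hR
  have hQ2 : ∀ i, Q i 2 = (1 : Matrix (Fin 3) (Fin 3) ℝ) i 2 := by
    intro i
    rw [← (mem_orthogonalGroup_iff' _ _).1 hA.1]
    simp only [Q, mul_apply, transpose_apply, hAR]
  obtain ⟨h₃, hQZ⟩ := eq_rotZ_of_col_two hQ (by simpa using hQ2 0) (by simpa using hQ2 1)
    (by simpa using hQ2 2)
  refine ⟨c₁, s₁, c₂, s₂, _, _, h₁, h₂, h₃, ?_⟩
  rw [← hQZ]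
  change R = A * (Aᵀ * R)
  rw [← Matrix.mul_assoc, (mem_orthogonalGroup_iff _ _).1 hA.1, Matrix.one_mul]

theorem exists_sq_sub_sq_eq_and_two_mul_mul_eq {c s : ℝ} (h : c ^ 2 + s ^ 2 = 1) :
    ∃ a b : ℝ, a ^ 2 + b ^ 2 = 1 ∧ a ^ 2 - b ^ 2 = c ∧ 2 * a * b = s := by
  obtain ⟨w, hw⟩ := IsAlgClosed.exists_pow_nat_eq (⟨c, s⟩ : ℂ) two_pos
  have hc : w.re ^ 2 - w.im ^ 2 = c := by
    have := congrArg Complex.re hw; rw [sq, Complex.mul_re] at this; linear_combination this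
  have hs : 2 * w.re * w.im = s := by
    have := congrArg Complex.im hw; rw [sq, Complex.mul_im] at this; linear_combination this
  refine ⟨w.re, w.im, ?_, hc, hs⟩
  have : (w.re ^ 2 + w.im ^ 2) ^ 2 = 1 := by rw [← h, ← hc, ← hs]; ring
  exact (pow_eq_one_iff_of_nonneg (by positivity) two_ne_zero).1 this

noncomputable def spinZ (a b : ℝ) : Matrix (Fin 2) (Fin 2) ℂ :=
  !![a - b * Complex.I, 0; 0, a + b * Complex.I]

noncomputable def spinY (a b : ℝ) : Matrix (Fin 2) (Fin 2) ℂ := !![a, -b; b, a]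

theorem spinZ_mem_specialUnitaryGroup {a b : ℝ} (h : a ^ 2 + b ^ 2 = 1) :
    spinZ a b ∈ specialUnitaryGroup (Fin 2) ℂ := by
  refine ⟨mem_unitaryGroup_iff.2 ?_, ?_⟩
  · ext i j
    fin_cases i <;> fin_cases j <;>
      simp [spinZ, mul_apply, one_apply, Fin.sum_univ_two, Complex.ext_iff] <;>
      exact ⟨by linarith, by ring⟩
  · simp [spinZ, det_fin_two, Complex.ext_iff, ← sq, h, mul_comm]

theorem spinY_mem_specialUnitaryGroup {a b : ℝ} (h : a ^ 2 + b ^ 2 = 1) :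
    spinY a b ∈ specialUnitaryGroup (Fin 2) ℂ := by
  refine ⟨mem_unitaryGroup_iff.2 ?_, ?_⟩
  · ext i j
    fin_cases i <;> fin_cases j <;>
      simp [spinY, mul_apply, one_apply, Fin.sum_univ_two, Complex.ext_iff] <;> linarith
  · simp [spinY, det_fin_two, Complex.ext_iff]; linarith

theorem conjActsBy_spinZ {a b : ℝ} (h : a ^ 2 + b ^ 2 = 1) :
    ConjActsBy pauli (spinZ a b) (rotZ (a ^ 2 - b ^ 2) (2 * a * b)) := by
  intro α
  rw [Fin.sum_univ_three]
  ext i j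
  fin_cases α <;> fin_cases i <;> fin_cases j <;>
    simp [spinZ, rotZ, pauli, mul_apply, Fin.sum_univ_two, Complex.ext_iff, sq] <;>
    constructor <;> linarith

theorem conjActsBy_spinY {a b : ℝ} (h : a ^ 2 + b ^ 2 = 1) :
    ConjActsBy pauli (spinY a b) (rotY (a ^ 2 - b ^ 2) (2 * a * b)) := by
  intro α
  rw [Fin.sum_univ_three]
  ext i j
  fin_cases α <;> fin_cases i <;> fin_cases j <;>
    simp [spinY, rotY, pauli, mul_apply, Fin.sum_univ_two, Complex.ext_iff, sq] <;> linarith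

theorem exists_conjActsBy_rotZ {c s : ℝ} (h : c ^ 2 + s ^ 2 = 1) :
    ∃ K ∈ specialUnitaryGroup (Fin 2) ℂ, ConjActsBy pauli K (rotZ c s) := by
  obtain ⟨a, b, hab, rfl, rfl⟩ := exists_sq_sub_sq_eq_and_two_mul_mul_eq h
  exact ⟨_, spinZ_mem_specialUnitaryGroup hab, conjActsBy_spinZ hab⟩

theorem exists_conjActsBy_rotY {c s : ℝ} (h : c ^ 2 + s ^ 2 = 1) :
    ∃ K ∈ specialUnitaryGroup (Fin 2) ℂ, ConjActsBy pauli K (rotY c s) := by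
  obtain ⟨a, b, hab, rfl, rfl⟩ := exists_sq_sub_sq_eq_and_two_mul_mul_eq h
  exact ⟨_, spinY_mem_specialUnitaryGroup hab, conjActsBy_spinY hab⟩

theorem exists_conjActsBy_pauli {R : Matrix (Fin 3) (Fin 3) ℝ}
    (hR : R ∈ specialOrthogonalGroup (Fin 3) ℝ) :
    ∃ K ∈ specialUnitaryGroup (Fin 2) ℂ, ConjActsBy pauli K R := by
  obtain ⟨c₁, s₁, c₂, s₂, c₃, s₃, h₁, h₂, h₃, rfl⟩ := exists_eq_rotZ_mul_rotY_mul_rotZ hR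
  obtain ⟨K₁, hK₁, hK₁R⟩ := exists_conjActsBy_rotZ h₁
  obtain ⟨K₂, hK₂, hK₂R⟩ := exists_conjActsBy_rotY h₂
  obtain ⟨K₃, hK₃, hK₃R⟩ := exists_conjActsBy_rotZ h₃
  exact ⟨K₁ * K₂ * K₃, mul_mem (mul_mem hK₁ hK₂) hK₃, (hK₁R.mul hK₂R).mul hK₃R⟩

/-- every coupling Hamiltonian `H_c = ∑ J_{αβ} I_α S_β` can be diagonalized by a
local unitary `K = K₁ ⊗ K₂ ∈ SU(2) ⊗ SU(2)`:
`K H_c K† = a_x I_xS_x + a_y I_yS_y + a_z I_zS_z` with `a_x ≥ a_y ≥ |a_z|`. -/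
theorem coupling_hamiltonian_diagonalization (J : Fin 3 → Fin 3 → ℝ) :
    ∃ K₁ K₂ : Matrix (Fin 2) (Fin 2) ℂ,
      K₁ ∈ Matrix.unitaryGroup (Fin 2) ℂ ∧ K₁.det = 1 ∧
      K₂ ∈ Matrix.unitaryGroup (Fin 2) ℂ ∧ K₂.det = 1 ∧
      ∃ a : Fin 3 → ℝ, a 0 ≥ a 1 ∧ a 1 ≥ |a 2| ∧
        (K₁ ⊗ₖ K₂) * (∑ α, ∑ β, J α β • (pauli α ⊗ₖ pauli β)) * (K₁ ⊗ₖ K₂)ᴴ =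
          ∑ α, a α • (pauli α ⊗ₖ pauli α) := by
  obtain ⟨R₁, hR₁, R₂, hR₂, a, ha₀₁, ha₁₂, hdiag⟩ :=
    exists_specialOrthogonal_mul_mul_transpose_eq_diagonal_fin_three (of J)
  obtain ⟨K₁, ⟨hK₁, hK₁det⟩, hK₁R⟩ := exists_conjActsBy_pauli hR₁
  obtain ⟨K₂, ⟨hK₂, hK₂det⟩, hK₂R⟩ := exists_conjActsBy_pauli hR₂
  refine ⟨K₁, K₂, hK₁, hK₁det, hK₂, hK₂det, a, ha₀₁, ha₁₂, ?_⟩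
  calc _ = ∑ γ, ∑ δ, (R₁ * of J * R₂ᵀ) γ δ • (pauli γ ⊗ₖ pauli δ) :=
        hK₁R.kronecker_conj_sum hK₂R (of J)
    _ = _ := by simp [hdiag, diagonal_apply, ite_smul]
end

section
/- Let S = diag(1,...,1,-1,...,-1) (n ones and n minus ones) and U ∈ SU(2n). Then the eigenvalues of U S U† S occur in conjugate pairs: if e^{iθ} is an eigenvalue with eigenvector x, then e^{-iθ} is an eigenvalue with eigenvector S x, and the multiplicities of e^{iθ} and e^{-iθ} agree. -/
open Matrix

lemma aux_eig_step {m : Type*} [Fintype m] [DecidableEq m]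
    (S T : Matrix m m ℂ) (hTST : T * S * T = S) (μ : ℂ) (hμ : μ ≠ 0)
    (x : m → ℂ) (hx : T.mulVec x = μ • x) :
    T.mulVec (S.mulVec x) = μ⁻¹ • S.mulVec x := by
  have h1 : S.mulVec x = μ • T.mulVec (S.mulVec x) := by
    calc S.mulVec x = (T * S * T).mulVec x := by rw [hTST]
    _ = T.mulVec (S.mulVec (T.mulVec x)) := by
        rw [← Matrix.mulVec_mulVec, ← Matrix.mulVec_mulVec]
    _ = μ • T.mulVec (S.mulVec x) := by
        rw [hx, Matrix.mulVec_smul, Matrix.mulVec_smul]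
  calc T.mulVec (S.mulVec x) = μ⁻¹ • (μ • T.mulVec (S.mulVec x)) := by
        rw [smul_smul, inv_mul_cancel₀ hμ, one_smul]
  _ = μ⁻¹ • S.mulVec x := by rw [← h1]

lemma aux_map_le {m : Type*} [Fintype m] [DecidableEq m]
    (S T : Matrix m m ℂ) (hTST : T * S * T = S) (μ : ℂ) (hμ : μ ≠ 0) :
    Submodule.map (Matrix.toLin' S) (Module.End.eigenspace (Matrix.toLin' T) μ) ≤
      Module.End.eigenspace (Matrix.toLin' T) μ⁻¹ := by
  rintro _ ⟨x, hx, rfl⟩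
  rw [SetLike.mem_coe] at hx
  rw [Module.End.mem_eigenspace_iff] at hx ⊢
  simp only [Matrix.toLin'_apply] at hx ⊢
  exact aux_eig_step S T hTST μ hμ x hx

/-- for `S = diag(1,…,1,-1,…,-1)` and `U ∈ SU(2n)`, the eigenvalues of
`U S U† S` occur in conjugate pairs: if `e^{iθ}` is an eigenvalue with eigenvector `x` then
`e^{-iθ}` is an eigenvalue with eigenvector `S x`, and the multiplicities of `e^{iθ}` and
`e^{-iθ}` agree. -/
theorem conjugate_pair_eigenvalues (n : ℕ)
    (U : Matrix (Fin n ⊕ Fin n) (Fin n ⊕ Fin n) ℂ)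
    (hU : U ∈ Matrix.unitaryGroup (Fin n ⊕ Fin n) ℂ) (hdet : U.det = 1) :
    let S : Matrix (Fin n ⊕ Fin n) (Fin n ⊕ Fin n) ℂ := Matrix.fromBlocks 1 0 0 (-1)
    let T : Matrix (Fin n ⊕ Fin n) (Fin n ⊕ Fin n) ℂ := U * S * Uᴴ * S
    (∀ (θ : ℝ) (x : (Fin n ⊕ Fin n) → ℂ), x ≠ 0 →
      T.mulVec x = Complex.exp (Complex.I * θ) • x →
      S.mulVec x ≠ 0 ∧
      T.mulVec (S.mulVec x) = Complex.exp (-(Complex.I * θ)) • S.mulVec x) ∧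
    (∀ θ : ℝ,
      Module.finrank ℂ
        (Module.End.eigenspace (Matrix.toLin' T) (Complex.exp (Complex.I * θ))) =
      Module.finrank ℂ
        (Module.End.eigenspace (Matrix.toLin' T) (Complex.exp (-(Complex.I * θ))))) := by
  intro S T
  have hSS : S * S = 1 := by
    show Matrix.fromBlocks 1 0 0 (-1) * Matrix.fromBlocks 1 0 0 (-1) = 1
    simp [Matrix.fromBlocks_multiply, ← Matrix.fromBlocks_one]
  have hU1 : Uᴴ * U = 1 := by
    have := hU.1; rwa [Matrix.star_eq_conjTranspose] at this
  have hU2 : U * Uᴴ = 1 := by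
    have := hU.2; rwa [Matrix.star_eq_conjTranspose] at this
  have hA : (U * S * Uᴴ) * (U * S * Uᴴ) = 1 := by
    calc (U * S * Uᴴ) * (U * S * Uᴴ) = U * (S * ((Uᴴ * U) * (S * Uᴴ))) := by
          simp only [mul_assoc]
    _ = U * (S * (S * Uᴴ)) := by rw [hU1, one_mul]
    _ = U * ((S * S) * Uᴴ) := by rw [mul_assoc]
    _ = 1 := by rw [hSS, one_mul, hU2]
  have hTST : T * S * T = S := by
    show ((U * S * Uᴴ) * S) * S * ((U * S * Uᴴ) * S) = S
    calc ((U * S * Uᴴ) * S) * S * ((U * S * Uᴴ) * S)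
        = ((U * S * Uᴴ) * (S * S)) * ((U * S * Uᴴ) * S) := by rw [mul_assoc (U * S * Uᴴ) S S]
    _ = (U * S * Uᴴ) * ((U * S * Uᴴ) * S) := by rw [hSS, mul_one]
    _ = ((U * S * Uᴴ) * (U * S * Uᴴ)) * S := (mul_assoc _ _ _).symm
    _ = S := by rw [hA, one_mul]
  have hexp : ∀ θ : ℝ, Complex.exp (-(Complex.I * θ)) = (Complex.exp (Complex.I * θ))⁻¹ :=
    fun θ => Complex.exp_neg _
  constructor
  · intro θ x hx hTx
    have hμ : Complex.exp (Complex.I * θ) ≠ 0 := Complex.exp_ne_zero _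
    constructor
    · intro h0
      apply hx
      have : S.mulVec (S.mulVec x) = x := by
        rw [Matrix.mulVec_mulVec, hSS, Matrix.one_mulVec]
      rw [← this, h0, Matrix.mulVec_zero]
    · rw [hexp θ]
      exact aux_eig_step S T hTST _ hμ x hTx
  · intro θ
    set μ := Complex.exp (Complex.I * θ) with hμdef
    have hμ : μ ≠ 0 := Complex.exp_ne_zero _
    have hμ' : μ⁻¹ ≠ 0 := inv_ne_zero hμ
    rw [hexp θ]
    -- linear equiv given by S
    have hff : Matrix.toLin' S ∘ₗ Matrix.toLin' S = LinearMap.id := by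
      rw [← Matrix.toLin'_mul, hSS, Matrix.toLin'_one]
    let e : ((Fin n ⊕ Fin n) → ℂ) ≃ₗ[ℂ] ((Fin n ⊕ Fin n) → ℂ) :=
      LinearEquiv.ofLinear (Matrix.toLin' S) (Matrix.toLin' S) hff hff
    have hmap : Submodule.map (Matrix.toLin' S)
        (Module.End.eigenspace (Matrix.toLin' T) μ) =
        Module.End.eigenspace (Matrix.toLin' T) μ⁻¹ := by
      apply le_antisymm
      · exact aux_map_le S T hTST μ hμ
      · have h2 := aux_map_le S T hTST μ⁻¹ hμ'
        rw [inv_inv] at h2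
        intro y hy
        have hy' : Matrix.toLin' S y ∈ Module.End.eigenspace (Matrix.toLin' T) μ :=
          h2 ⟨y, hy, rfl⟩
        refine ⟨Matrix.toLin' S y, hy', ?_⟩
        have := LinearMap.congr_fun hff y
        simpa using this
    rw [← hmap]
    exact (LinearEquiv.finrank_map_eq e (Module.End.eigenspace (Matrix.toLin' T) μ)).symm
end

section
/- With notation as in the eigendecomposition of ad_a² on 𝔭: for X ∈ 𝔨, if X is orthogonal (w.r.t. the Killing form) to all the vectors Xᵢ = [a,Yᵢ]/λᵢ associated to nonzero eigenvalues of ad_a², then [a, X] = 0. -/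
/-- with the eigendecomposition of `ad_a²` on `𝔭` (eigenvectors `Yᵢ` with
eigenvalues `-λᵢ² < 0`, `Xᵢ = [a,Yᵢ]/λᵢ ∈ 𝔨`, and every element of `𝔭` a sum of a kernel
element and a combination of the `Yᵢ`): if `X ∈ 𝔨` is Killing-orthogonal to all `Xᵢ`, then
`[a, X] = 0`. -/
theorem centralizer_orthogonal_complement
    (L : Type*) [LieRing L] [LieAlgebra ℝ L] [Module.Finite ℝ L]
    (hneg : ∀ x : L, x ≠ 0 → killingForm ℝ L x x < 0)
    (𝔭 𝔨 : Submodule ℝ L) (hcompl : IsCompl 𝔭 𝔨)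
    (hkk : ∀ x ∈ 𝔨, ∀ y ∈ 𝔨, ⁅x, y⁆ ∈ 𝔨)
    (hkp : ∀ x ∈ 𝔨, ∀ y ∈ 𝔭, ⁅x, y⁆ ∈ 𝔭)
    (hpp : ∀ x ∈ 𝔭, ∀ y ∈ 𝔭, ⁅x, y⁆ ∈ 𝔨)
    (𝔞 : Submodule ℝ L) (h𝔞 : 𝔞 ≤ 𝔭)
    (habel : ∀ x ∈ 𝔞, ∀ y ∈ 𝔞, ⁅x, y⁆ = 0)
    (a : L) (ha : a ∈ 𝔞)
    (m : ℕ) (Y : Fin m → L) (lam : Fin m → ℝ)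
    (hY𝔭 : ∀ i, Y i ∈ 𝔭) (hY0 : ∀ i, Y i ≠ 0) (hlam : ∀ i, 0 < lam i)
    (heig : ∀ i, ⁅a, ⁅a, Y i⁆⁆ = (-(lam i ^ 2)) • Y i)
    (hspan : ∀ p ∈ 𝔭, ∃ (p₀ : L) (c : Fin m → ℝ),
      p₀ ∈ 𝔭 ∧ ⁅a, p₀⁆ = 0 ∧ p = p₀ + ∑ i, c i • Y i)
    (X : L) (hX : X ∈ 𝔨)
    (hXorth : ∀ i, killingForm ℝ L X ((lam i)⁻¹ • ⁅a, Y i⁆) = 0) :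
    ⁅a, X⁆ = 0 := by
  -- [a, X] ∈ 𝔭
  have hmem : ⁅a, X⁆ ∈ 𝔭 := by
    have h1 : ⁅X, a⁆ ∈ 𝔭 := hkp X hX a (h𝔞 ha)
    have : ⁅a, X⁆ = -⁅X, a⁆ := by rw [← lie_skew]
    rw [this]; exact neg_mem h1
  obtain ⟨p₀, c, hp₀, hap₀, heq⟩ := hspan _ hmem
  -- key orthogonality facts
  have hXY : ∀ i, killingForm ℝ L X ⁅a, Y i⁆ = 0 := by
    intro i
    have h := hXorth i
    rw [map_smul, smul_eq_mul] at h
    have hne : (lam i)⁻¹ ≠ 0 := inv_ne_zero (hlam i).ne'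
    exact (mul_eq_zero.mp h).resolve_left hne
  -- B(⁅a,X⁆, w) = -B(X, ⁅a,w⁆)
  have hswap : ∀ w : L, killingForm ℝ L ⁅a, X⁆ w = - killingForm ℝ L X ⁅a, w⁆ := by
    intro w
    have : ⁅a, X⁆ = -⁅X, a⁆ := by rw [← lie_skew]
    rw [this, map_neg, LinearMap.neg_apply,
      LieModule.traceForm_apply_lie_apply ℝ L L X a w]
  have h1 : killingForm ℝ L ⁅a, X⁆ p₀ = 0 := by
    rw [hswap p₀, hap₀, map_zero, neg_zero]
  have h2 : ∀ i, killingForm ℝ L ⁅a, X⁆ (c i • Y i) = 0 := by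
    intro i
    rw [map_smul, smul_eq_mul, hswap (Y i), hXY i]
    ring
  have hzero : killingForm ℝ L ⁅a, X⁆ ⁅a, X⁆ = 0 := by
    nth_rewrite 2 [heq]
    rw [map_add, map_sum, h1]
    simp [h2]
  by_contra h
  exact absurd hzero (hneg _ h).ne
end
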